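/- arXiv:1512.02940 — 8 statements merged into one kernel-verified Lean document; each statement's English description precedes it below -/
import Mathlib

section
/- Let n ≥ 1 and let v_0,…,v_n be affinely independent points in ℝ^n forming an n-simplex S, with vertex Gramians G_0,…,G_n. Then the following are equivalent: (i) for some ℓ ∈ {0,…,n}, the inverse of G_ℓ is a weakly diagonally dominant Stieltjes matrix; (ii) for every ℓ ∈ {0,…,n}, all off-diagonal entries of the inverse of G_ℓ are nonpositive (i.e., G_ℓ⁻¹ is a Stieltjes matrix); (iii) for every ℓ ∈ {0,…,n}, the inverse of G_ℓ is weakly diagonally dominant; (iv) for every j ∈ {0,…,n}, the orthogonal projection of v_j onto the affine span of {v_k : k ≠ j} lies in the convex hull of {v_k : k ≠ j}. -/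
/-!
Let `nᵢ` be the gradient of the `i`-th barycentric coordinate `λᵢ`, so that
`⟪nᵢ, v_a - v_c⟫ = λᵢ v_a - λᵢ v_c` and `∑ i, nᵢ = 0`. Then `(n_k)_{k ≠ ℓ}` is the basis dual to
`(v_k - v_ℓ)_{k ≠ ℓ}`, hence `G_ℓ⁻¹` is the Gram matrix of `(n_k)_{k ≠ ℓ}` and its row sums are
`-⟪nᵢ, n_ℓ⟫`. So each of (i)–(iii) says that `⟪nᵢ, nⱼ⟫ ≤ 0` for all `i ≠ j`. The orthogonal
projection of `vⱼ` onto the opposite facet is `vⱼ - nⱼ / ‖nⱼ‖²`, whose barycentric coordinates are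
`-⟪n_k, nⱼ⟫ / ‖nⱼ‖²` for `k ≠ j`; so (iv) says the same.
-/

open Matrix Finset
open scoped RealInnerProductSpace

noncomputable section

/-- The vertex Gramian of the simplex with vertices `v` associated with vertex `v ℓ`. -/
def vGram {n : ℕ} (v : Fin (n + 1) → EuclideanSpace ℝ (Fin n)) (ℓ : Fin (n + 1)) :
    Matrix {k : Fin (n + 1) // k ≠ ℓ} {k : Fin (n + 1) // k ≠ ℓ} ℝ :=
  Matrix.of fun i j => ⟪v i.1 - v ℓ, v j.1 - v ℓ⟫

/-- A Stieltjes matrix: symmetric positive definite with nonpositive off-diagonal entries. -/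
def IsStieltjes {ι : Type*} [Fintype ι] (M : Matrix ι ι ℝ) : Prop :=
  M.PosDef ∧ ∀ i j, i ≠ j → M i j ≤ 0

/-- Weakly diagonally dominant: `M e ≥ 0` entrywise for the all-ones vector `e`. -/
def IsWDD {ι : Type*} [Fintype ι] (M : Matrix ι ι ℝ) : Prop :=
  ∀ i, 0 ≤ ∑ j, M i j

/-- Pointwise weakly diagonally dominant: each diagonal entry is maximal in its row. -/
def PWDD {ι : Type*} (M : Matrix ι ι ℝ) : Prop :=
  ∀ i j, M i j ≤ M i i

/-- The orthogonal projection of `x` onto the affine span of `{v k : k ∈ s}`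
lies in the convex hull of `{v k : k ∈ s}`. -/
def ProjInHull {n : ℕ} (x : EuclideanSpace ℝ (Fin n))
    (v : Fin (n + 1) → EuclideanSpace ℝ (Fin n)) (s : Set (Fin (n + 1))) : Prop :=
  ∃ p ∈ convexHull ℝ (v '' s), ∀ a ∈ s, ∀ b ∈ s, ⟪x - p, v a - v b⟫ = 0

/-- All facets of the simplex are nonobtuse: each vertex `v i` projects, for each `j ≠ i`,
into the convex hull of the vertices other than `v i, v j`. -/
def FacetsNonobtuse {n : ℕ} (v : Fin (n + 1) → EuclideanSpace ℝ (Fin n)) : Prop :=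
  ∀ i j : Fin (n + 1), i ≠ j → ProjInHull (v i) v {k | k ≠ i ∧ k ≠ j}

/-- `q` is an inward normal to the facet opposite `v j`. -/
def IsInwardNormal {n : ℕ} (v : Fin (n + 1) → EuclideanSpace ℝ (Fin n)) (j : Fin (n + 1))
    (q : EuclideanSpace ℝ (Fin n)) : Prop :=
  q ≠ 0 ∧ (∀ a b : Fin (n + 1), a ≠ j → b ≠ j → ⟪q, v a - v b⟫ = 0) ∧
    ∀ k : Fin (n + 1), k ≠ j → 0 < ⟪q, v j - v k⟫

/-- The `j`-th column of `A` is a blocking column: no off-diagonal entry of column `j`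
is minimal in its row. -/
def IsBlockingCol {ι : Type*} (A : Matrix ι ι ℝ) (j : ι) : Prop :=
  ∀ i, i ≠ j → ∃ k, A i k < A i j

/-- `A` is nonblocking: every column has an off-diagonal entry minimal in its row. -/
def IsNonblocking {ι : Type*} (A : Matrix ι ι ℝ) : Prop :=
  ∀ j, ∃ i, i ≠ j ∧ ∀ k, A i j ≤ A i k

/-- A (symmetric nonnegative) ultrametric matrix. -/
def IsUltra {ι : Type*} (A : Matrix ι ι ℝ) : Prop :=
  (∀ i j, 0 ≤ A i j) ∧ (∀ i j, A i j ≤ A i i) ∧ ∀ i j k, min (A i k) (A k j) ≤ A i j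

/-- The principal submatrix of `A` with rows and columns restricted to `s`. -/
def subMat {ι : Type*} (A : Matrix ι ι ℝ) (s : Finset ι) :
    Matrix {x // x ∈ s} {x // x ∈ s} ℝ :=
  A.submatrix (fun i => i.1) (fun j => j.1)

/-- The principal submatrix of `A` obtained by deleting row and column `m`. -/
def delMat {ι : Type*} (A : Matrix ι ι ℝ) (m : ι) : Matrix {i // i ≠ m} {i // i ≠ m} ℝ :=
  A.submatrix (fun i => i.1) (fun j => j.1)

section Tetra

variable {V : Type*} [NormedAddCommGroup V] [InnerProductSpace ℝ V]

/-- The triangle with vertices `a, b, c` is nonobtuse. -/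
def NonobtuseTri (a b c : V) : Prop :=
  0 ≤ ⟪b - a, c - a⟫ ∧ 0 ≤ ⟪a - b, c - b⟫ ∧ 0 ≤ ⟪a - c, b - c⟫

/-- The sub-orthocentric set of the triangle `a b c`: the union over the vertices of the
closed segments from the vertex to the orthocenter. -/
def SubOrthoSet (a b c : V) : Set V :=
  {x | ∃ h, h ∈ affineSpan ℝ ({a, b, c} : Set V) ∧
    ⟪h - a, b - c⟫ = 0 ∧ ⟪h - b, a - c⟫ = 0 ∧
    (x ∈ segment ℝ a h ∨ x ∈ segment ℝ b h ∨ x ∈ segment ℝ c h)}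

/-- `p` is the orthogonal projection of `x` onto the affine span of `{a, b, c}`. -/
def IsOrthProjTri (x p a b c : V) : Prop :=
  p ∈ affineSpan ℝ ({a, b, c} : Set V) ∧ ⟪x - p, b - a⟫ = 0 ∧ ⟪x - p, c - a⟫ = 0

/-- A sub-orthocentric tetrahedron: all triangular faces are nonobtuse and each vertex
projects orthogonally into the sub-orthocentric set of its opposite face. -/
def IsSubOrthoTetra (w : Fin 4 → V) : Prop :=
  ∀ i : Fin 4,
    NonobtuseTri (w (i.succAbove 0)) (w (i.succAbove 1)) (w (i.succAbove 2)) ∧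
    ∃ p, IsOrthProjTri (w i) p (w (i.succAbove 0)) (w (i.succAbove 1)) (w (i.succAbove 2)) ∧
      p ∈ SubOrthoSet (w (i.succAbove 0)) (w (i.succAbove 1)) (w (i.succAbove 2))

end Tetra

namespace AffineBasis

section ConvexHull

variable {ι 𝕜 E : Type*} [Fintype ι] [Field 𝕜] [LinearOrder 𝕜] [IsStrictOrderedRing 𝕜]
  [AddCommGroup E] [Module 𝕜 E]

theorem mem_convexHull_image_iff (b : AffineBasis ι 𝕜 E) (s : Set ι) (x : E) :
    x ∈ convexHull 𝕜 (b '' s) ↔ ∀ i, 0 ≤ b.coord i x ∧ (i ∉ s → b.coord i x = 0) := by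
  classical
  constructor
  · refine fun hx => convexHull_min (t := {y | ∀ i, 0 ≤ b.coord i y ∧ (i ∉ s → b.coord i y = 0)})
      ?_ ?_ hx
    · rintro _ ⟨j, hj, rfl⟩ i
      rw [coord_apply]
      split_ifs with h
      · exact ⟨zero_le_one, fun hi => (hi (h ▸ hj)).elim⟩
      · exact ⟨le_rfl, fun _ => rfl⟩
    · intro y hy z hz t u ht hu htu i
      rw [Convex.combo_affine_apply htu, smul_eq_mul, smul_eq_mul]
      exact ⟨by nlinarith [(hy i).1, (hz i).1], fun hi => by rw [(hy i).2 hi, (hz i).2 hi]; ring⟩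
  · intro hx
    have hsupp : ∀ i ∈ univ, b.coord i x ≠ 0 → i ∈ s := fun i _ h =>
      by_contra fun hi => h ((hx i).2 hi)
    rw [← b.linear_combination_coord_eq_self x]
    rw [← sum_filter_of_ne fun i hi h => hsupp i hi (left_ne_zero_of_smul h)]
    refine (convex_convexHull 𝕜 _).sum_mem (fun i _ => (hx i).1) ?_ fun i hi => ?_
    · rw [sum_filter_of_ne hsupp, sum_coord_apply_eq_one]
    · exact subset_convexHull 𝕜 _ ⟨i, (mem_filter.mp hi).2, rfl⟩

end ConvexHull

variable {ι V : Type*} [NormedAddCommGroup V] [InnerProductSpace ℝ V] [FiniteDimensional ℝ V]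
  (b : AffineBasis ι ℝ V)

def baryGrad (i : ι) : V :=
  (InnerProductSpace.toDual ℝ V).symm (b.coord i).linear.toContinuousLinearMap

theorem inner_baryGrad_sub (i : ι) (x y : V) :
    ⟪b.baryGrad i, x - y⟫ = b.coord i x - b.coord i y := by
  rw [baryGrad, InnerProductSpace.toDual_symm_apply]
  exact (b.coord i).linearMap_vsub x y

theorem inner_baryGrad (i : ι) (x : V) : ⟪b.baryGrad i, x⟫ = b.coord i x - b.coord i 0 := by
  simpa using b.inner_baryGrad_sub i x 0

theorem inner_baryGrad_sub_eq_zero {i j k : ι} (hj : j ≠ i) (hk : k ≠ i) :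
    ⟪b.baryGrad i, b j - b k⟫ = 0 := by
  rw [inner_baryGrad_sub, b.coord_apply_ne hj.symm, b.coord_apply_ne hk.symm, sub_self]

theorem inner_baryGrad_self_sub {i ℓ : ι} (hℓ : ℓ ≠ i) : ⟪b.baryGrad i, b i - b ℓ⟫ = 1 := by
  rw [inner_baryGrad_sub, b.coord_apply_eq, b.coord_apply_ne hℓ.symm, sub_zero]

theorem baryGrad_ne_zero [Nontrivial ι] (i : ι) : b.baryGrad i ≠ 0 := by
  obtain ⟨ℓ, hℓ⟩ := exists_ne i
  intro h
  simpa [h] using b.inner_baryGrad_self_sub hℓ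

theorem eq_smul_baryGrad_of_inner_sub_eq_zero {j ℓ : ι} (hℓ : ℓ ≠ j) {z : V}
    (hz : ∀ k ≠ j, ⟪z, b k - b ℓ⟫ = 0) : z = ⟪z, b j - b ℓ⟫ • b.baryGrad j := by
  refine InnerProductSpace.ext_inner_left_basis (b.basisOf ℓ) fun k => ?_
  rw [basisOf_apply, vsub_eq_sub, real_inner_smul_right, real_inner_comm (b.baryGrad j)]
  by_cases hk : (k : ι) = j
  · rw [hk, inner_baryGrad_self_sub b hℓ, mul_one, real_inner_comm]
  · rw [inner_baryGrad_sub_eq_zero b hk hℓ, mul_zero, real_inner_comm, hz k hk]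

/-- `b.baryGrad i` is an inward normal of the facet opposite `b i`, so this says that all dihedral
angles of the simplex `b` are at most `π / 2`. -/
def IsNonobtuse : Prop := ∀ i j, i ≠ j → ⟪b.baryGrad i, b.baryGrad j⟫ ≤ 0

theorem isNonobtuse_iff_of_ne (ℓ : ι) : b.IsNonobtuse ↔
    (∀ i ≠ ℓ, ∀ j ≠ ℓ, i ≠ j → ⟪b.baryGrad i, b.baryGrad j⟫ ≤ 0) ∧
      ∀ i ≠ ℓ, ⟪b.baryGrad i, b.baryGrad ℓ⟫ ≤ 0 := by
  refine ⟨fun h => ⟨fun i _ j _ => h i j, fun i hi => h i ℓ hi⟩, fun ⟨hoff, hℓ⟩ i j hij => ?_⟩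
  by_cases hi : i = ℓ
  · subst hi
    rw [real_inner_comm]
    exact hℓ j hij.symm
  by_cases hj : j = ℓ
  · subst hj
    exact hℓ i hi
  exact hoff i hi j hj hij

variable [Fintype ι]

theorem sum_baryGrad : ∑ i, b.baryGrad i = 0 := by
  have h : ∀ x, ⟪∑ i, b.baryGrad i, x⟫ = 0 := fun x => by
    simp_rw [sum_inner, inner_baryGrad, sum_sub_distrib, sum_coord_apply_eq_one, sub_self]
  exact inner_self_eq_zero.mp (h _)

theorem sum_subtype_ne_baryGrad [DecidableEq ι] (ℓ : ι) :
    ∑ k : {k // k ≠ ℓ}, b.baryGrad k = -b.baryGrad ℓ :=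
  eq_neg_of_add_eq_zero_right ((Fintype.sum_eq_add_sum_subtype_ne _ ℓ).symm.trans b.sum_baryGrad)

theorem sum_inner_baryGrad_smul (x : V) : ∑ k, ⟪b.baryGrad k, x⟫ • b k = x := by
  simp_rw [inner_baryGrad, sub_smul, sum_sub_distrib, linear_combination_coord_eq_self, sub_zero]

theorem sum_inner_baryGrad_smul_sub [DecidableEq ι] (ℓ : ι) (x : V) :
    ∑ k : {k // k ≠ ℓ}, ⟪b.baryGrad k, x⟫ • (b k - b ℓ) = x := by
  rw [← zero_add (∑ k : {k // k ≠ ℓ}, _), ← smul_zero ⟪b.baryGrad ℓ, x⟫, ← sub_self (b ℓ),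
    ← Fintype.sum_eq_add_sum_subtype_ne (fun k => ⟪b.baryGrad k, x⟫ • (b k - b ℓ))]
  simp_rw [smul_sub, sum_sub_distrib, sum_inner_baryGrad_smul, ← sum_smul, ← sum_inner,
    sum_baryGrad, inner_zero_left, zero_smul, sub_zero]

theorem inv_gram_sub_eq_gram_baryGrad [DecidableEq ι] (ℓ : ι) :
    (gram ℝ fun k : {k // k ≠ ℓ} => b k - b ℓ)⁻¹ = gram ℝ fun k : {k // k ≠ ℓ} => b.baryGrad k := by
  refine inv_eq_right_inv (Matrix.ext fun i j => ?_)
  have hterm : ∀ k : {k // k ≠ ℓ}, ⟪b i - b ℓ, b k - b ℓ⟫ * ⟪b.baryGrad k, b.baryGrad j⟫ =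
      ⟪b i - b ℓ, ⟪b.baryGrad k, b.baryGrad j⟫ • (b k - b ℓ)⟫ := fun k => by
    rw [real_inner_smul_right, mul_comm]
  rw [mul_apply]
  simp only [gram_apply]
  rw [sum_congr rfl fun k _ => hterm k, ← inner_sum, sum_inner_baryGrad_smul_sub, real_inner_comm,
    inner_baryGrad_sub, coord_apply_ne _ j.2, sub_zero, coord_apply, one_apply]
  simp [Subtype.ext_iff, eq_comm]

theorem inner_baryGrad_eq_neg_of_forall_eq_or_eq {i j : ι} (hij : i ≠ j)
    (h : ∀ k, k = i ∨ k = j) : ⟪b.baryGrad i, b.baryGrad j⟫ = -⟪b.baryGrad i, b.baryGrad i⟫ := by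
  classical
  have huniv : (univ : Finset ι) = {i, j} := by ext k; simpa using h k
  have hsum := b.sum_baryGrad
  rw [huniv, sum_pair hij] at hsum
  rw [eq_neg_of_add_eq_zero_right hsum, inner_neg_right]

theorem isNonobtuse_iff_forall_ne_ne :
    b.IsNonobtuse ↔ ∀ ℓ, ∀ i ≠ ℓ, ∀ j ≠ ℓ, i ≠ j → ⟪b.baryGrad i, b.baryGrad j⟫ ≤ 0 := by
  refine ⟨fun h ℓ i _ j _ => h i j, fun h i j hij => ?_⟩
  by_cases hℓ : ∃ ℓ, ℓ ≠ i ∧ ℓ ≠ j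
  · obtain ⟨ℓ, hi, hj⟩ := hℓ
    exact h ℓ i hi.symm j hj.symm hij
  · push Not at hℓ
    rw [b.inner_baryGrad_eq_neg_of_forall_eq_or_eq hij fun k => or_iff_not_imp_left.mpr (hℓ k)]
    exact neg_nonpos.mpr real_inner_self_nonneg

theorem inner_baryGrad_nonpos_of_orthogonal_projection_mem_convexHull [Nontrivial ι] {j : ι}
    {p : V} (hp : p ∈ convexHull ℝ (b '' {k | k ≠ j}))
    (horth : ∀ a ≠ j, ∀ c ≠ j, ⟪b j - p, b a - b c⟫ = 0) {k : ι} (hk : k ≠ j) :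
    ⟪b.baryGrad k, b.baryGrad j⟫ ≤ 0 := by
  have hcoord := (b.mem_convexHull_image_iff _ p).mp hp
  obtain ⟨ℓ, hℓ⟩ := exists_ne j
  set c := ⟪b j - p, b j - b ℓ⟫
  have hd : b j - p = c • b.baryGrad j :=
    b.eq_smul_baryGrad_of_inner_sub_eq_zero hℓ fun k hk => horth k hk ℓ hℓ
  have hc : c * ⟪b.baryGrad j, b.baryGrad j⟫ = 1 := by
    have h := b.inner_baryGrad_sub j (b j) p
    rw [hd, real_inner_smul_right, coord_apply_eq, (hcoord j).2 (by simp), sub_zero] at h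
    exact h
  have hcoord_k : 0 ≤ -(c * ⟪b.baryGrad k, b.baryGrad j⟫) := by
    have h := b.inner_baryGrad_sub k (b j) p
    rw [hd, real_inner_smul_right, coord_apply_ne _ hk] at h
    linarith [(hcoord k).1]
  nlinarith [real_inner_self_nonneg (x := b.baryGrad j)]

theorem exists_orthogonal_projection_mem_convexHull [Nontrivial ι] {j : ι}
    (h : ∀ k ≠ j, ⟪b.baryGrad k, b.baryGrad j⟫ ≤ 0) :
    ∃ p ∈ convexHull ℝ (b '' {k | k ≠ j}), ∀ a ≠ j, ∀ c ≠ j, ⟪b j - p, b a - b c⟫ = 0 := by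
  set N := ⟪b.baryGrad j, b.baryGrad j⟫
  have hN : N ≠ 0 := inner_self_ne_zero.mpr (b.baryGrad_ne_zero j)
  set p := b j - N⁻¹ • b.baryGrad j
  have hd : b j - p = N⁻¹ • b.baryGrad j := sub_sub_cancel _ _
  have hcoord : ∀ i, b.coord i p = b.coord i (b j) - N⁻¹ * ⟪b.baryGrad i, b.baryGrad j⟫ :=
    fun i => by rw [← real_inner_smul_right, ← hd, inner_baryGrad_sub, sub_sub_cancel]
  refine ⟨p, (b.mem_convexHull_image_iff _ _).mpr fun i => ?_, fun a ha c hc => ?_⟩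
  · rw [hcoord]
    by_cases hi : i = j
    · rw [hi, coord_apply_eq, inv_mul_cancel₀ hN, sub_self]
      exact ⟨le_rfl, fun _ => rfl⟩
    · have := h i hi
      rw [coord_apply_ne _ hi, zero_sub, neg_nonneg]
      exact ⟨mul_nonpos_of_nonneg_of_nonpos (inv_nonneg.mpr real_inner_self_nonneg) this,
        fun hi' => absurd hi hi'⟩
  · rw [hd, real_inner_smul_left, inner_baryGrad_sub_eq_zero b ha hc, mul_zero]

end AffineBasis

section VertexGramian

variable {n : ℕ}

theorem posDef_vGram {v : Fin (n + 1) → EuclideanSpace ℝ (Fin n)} (hv : AffineIndependent ℝ v)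
    (ℓ : Fin (n + 1)) : (vGram v ℓ).PosDef :=
  posDef_gram_of_linearIndependent ((affineIndependent_iff_linearIndependent_vsub ℝ v ℓ).mp hv)

variable (b : AffineBasis (Fin (n + 1)) ℝ (EuclideanSpace ℝ (Fin n)))

theorem inv_vGram_apply (ℓ : Fin (n + 1)) (i j : {k // k ≠ ℓ}) :
    (vGram b ℓ)⁻¹ i j = ⟪b.baryGrad i, b.baryGrad j⟫ := by
  rw [show vGram b ℓ = gram ℝ fun k : {k // k ≠ ℓ} => b k - b ℓ from rfl,
    b.inv_gram_sub_eq_gram_baryGrad, gram_apply]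

theorem isWDD_inv_vGram_iff (ℓ : Fin (n + 1)) :
    IsWDD (vGram b ℓ)⁻¹ ↔ ∀ i ≠ ℓ, ⟪b.baryGrad i, b.baryGrad ℓ⟫ ≤ 0 := by
  simp only [IsWDD, inv_vGram_apply, ← inner_sum, b.sum_subtype_ne_baryGrad, inner_neg_right,
    neg_nonneg, Subtype.forall]

theorem inv_vGram_offDiag_nonpos_iff (ℓ : Fin (n + 1)) :
    (∀ i j, i ≠ j → (vGram b ℓ)⁻¹ i j ≤ 0) ↔
      ∀ i ≠ ℓ, ∀ j ≠ ℓ, i ≠ j → ⟪b.baryGrad i, b.baryGrad j⟫ ≤ 0 := by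
  simp only [inv_vGram_apply, Subtype.forall, ne_eq, Subtype.mk.injEq]

theorem exists_isStieltjes_and_isWDD_inv_vGram_iff :
    (∃ ℓ, IsStieltjes (vGram b ℓ)⁻¹ ∧ IsWDD (vGram b ℓ)⁻¹) ↔ b.IsNonobtuse := by
  refine ⟨fun ⟨ℓ, ⟨_, hoff⟩, hwdd⟩ => (b.isNonobtuse_iff_of_ne ℓ).mpr
    ⟨(inv_vGram_offDiag_nonpos_iff b ℓ).mp hoff, (isWDD_inv_vGram_iff b ℓ).mp hwdd⟩, fun h => ?_⟩
  obtain ⟨hoff, hwdd⟩ := (b.isNonobtuse_iff_of_ne 0).mp h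
  exact ⟨0, ⟨(posDef_vGram b.ind 0).inv, (inv_vGram_offDiag_nonpos_iff b 0).mpr hoff⟩,
    (isWDD_inv_vGram_iff b 0).mpr hwdd⟩

theorem forall_inv_vGram_offDiag_nonpos_iff :
    (∀ ℓ, ∀ i j, i ≠ j → (vGram b ℓ)⁻¹ i j ≤ 0) ↔ b.IsNonobtuse := by
  simp only [inv_vGram_offDiag_nonpos_iff, b.isNonobtuse_iff_forall_ne_ne]

theorem forall_isWDD_inv_vGram_iff : (∀ ℓ, IsWDD (vGram b ℓ)⁻¹) ↔ b.IsNonobtuse := by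
  simp only [isWDD_inv_vGram_iff]
  exact ⟨fun h i j hij => h j i hij, fun h j i hij => h i j hij⟩

theorem forall_projInHull_iff (hn : 1 ≤ n) :
    (∀ j, ProjInHull (b j) b {k | k ≠ j}) ↔ b.IsNonobtuse := by
  have : Nontrivial (Fin (n + 1)) := Fin.nontrivial_iff_two_le.mpr (by omega)
  refine ⟨fun h i j hij => ?_, fun h j => b.exists_orthogonal_projection_mem_convexHull
    fun k hk => h k j hk⟩
  obtain ⟨p, hp, horth⟩ := h j
  exact b.inner_baryGrad_nonpos_of_orthogonal_projection_mem_convexHull hp horth hij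

end VertexGramian

theorem stmt0 (n : ℕ) (hn : 1 ≤ n) (v : Fin (n + 1) → EuclideanSpace ℝ (Fin n))
    (hv : AffineIndependent ℝ v) :
    List.TFAE
      [ ∃ ℓ, IsStieltjes (vGram v ℓ)⁻¹ ∧ IsWDD (vGram v ℓ)⁻¹,
        ∀ ℓ, ∀ i j, i ≠ j → (vGram v ℓ)⁻¹ i j ≤ 0,
        ∀ ℓ, IsWDD (vGram v ℓ)⁻¹,
        ∀ j : Fin (n + 1), ProjInHull (v j) v {k | k ≠ j} ] := by
  obtain ⟨b, rfl⟩ : ∃ b : AffineBasis (Fin (n + 1)) ℝ (EuclideanSpace ℝ (Fin n)), ⇑b = v :=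
    ⟨⟨v, hv, hv.affineSpan_eq_top_iff_card_eq_finrank_add_one.mpr (by simp)⟩, rfl⟩
  have h1 := exists_isStieltjes_and_isWDD_inv_vGram_iff b
  tfae_have 1 ↔ 2 := h1.trans (forall_inv_vGram_offDiag_nonpos_iff b).symm
  tfae_have 1 ↔ 3 := h1.trans (forall_isWDD_inv_vGram_iff b).symm
  tfae_have 1 ↔ 4 := h1.trans (forall_projInHull_iff b hn).symm
  tfae_finish
end
end

section
/- Let n ≥ 2 and let v_0,…,v_n be affinely independent points in ℝ^n forming an n-simplex S, with vertex Gramians G_0,…,G_n. If the inverse of every vertex Gramian G_ℓ is a weakly diagonally dominant Stieltjes matrix (i.e., S is a nonobtuse simplex), then every (n−1)×(n−1) principal submatrix of every vertex Gramian G_ℓ has an inverse that is a weakly diagonally dominant Stieltjes matrix (i.e., each facet of a nonobtuse simplex is itself a nonobtuse simplex). -/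
/-!
Deleting row and column `m` of a positive definite `A` corresponds, on `M = A⁻¹`, to
eliminating the pivot `M m m`: `(delMat A m)⁻¹ i j = M i j - M i m * M m j / M m m`.
For a Stieltjes `M` the correction `M i m * M m j / M m m` is nonnegative, so off-diagonal
entries stay nonpositive, and row `i` of the new matrix sums to
`∑ j, M i j - (M i m / M m m) * ∑ j, M m j`, which is at least the old row sum when `M` is
weakly diagonally dominant. Positive definiteness passes to principal submatrices and inverses.
-/

open Matrix Finset
open scoped RealInnerProductSpace

noncomputable section

namespace Matrix

variable {ι : Type*}

def schurPivot (M : Matrix ι ι ℝ) (m : ι) : Matrix {i // i ≠ m} {i // i ≠ m} ℝ :=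
  of fun i j => M i j - M i m * M m j / M m m

theorem schurPivot_apply_nonpos {M : Matrix ι ι ℝ} {m : ι} (hoff : ∀ i j, i ≠ j → M i j ≤ 0)
    (hm : 0 ≤ M m m) {i j : {i // i ≠ m}} (hij : i ≠ j) : schurPivot M m i j ≤ 0 := by
  have hcorr : 0 ≤ M i m * M m j / M m m :=
    div_nonneg (mul_nonneg_of_nonpos_of_nonpos (hoff _ _ i.2) (hoff _ _ (Ne.symm j.2))) hm
  have hij : M i j ≤ 0 := hoff _ _ (Subtype.coe_ne_coe.mpr hij)
  simp only [schurPivot, of_apply]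
  linarith

variable [Fintype ι] [DecidableEq ι]

theorem sum_schurPivot_apply (M : Matrix ι ι ℝ) {m : ι} (hm : M m m ≠ 0) (i : {i // i ≠ m}) :
    ∑ j, schurPivot M m i j = ∑ j, M i j - M i m / M m m * ∑ j, M m j := by
  have hpivot : M i m - M i m * M m m / M m m = 0 := by
    rw [mul_div_cancel_right₀ _ hm, sub_self]
  calc ∑ j, schurPivot M m i j = ∑ j, (M i j - M i m * M m j / M m m) := by
        rw [Fintype.sum_eq_add_sum_subtype_ne _ m, hpivot, zero_add]
        rfl
    _ = ∑ j, M i j - M i m / M m m * ∑ j, M m j := by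
        rw [Finset.sum_sub_distrib, Finset.mul_sum]
        congr 1
        exact Finset.sum_congr rfl fun j _ => by ring

theorem inv_delMat_eq_schurPivot {A : Matrix ι ι ℝ} (hA : IsUnit A.det) {m : ι}
    (hm : A⁻¹ m m ≠ 0) : (delMat A m)⁻¹ = A⁻¹.schurPivot m := by
  set M := A⁻¹
  have hAM : A * M = 1 := mul_nonsing_inv A hA
  refine inv_eq_right_inv (ext fun i j => ?_)
  have hpivot : A i m * (M m j - M m m * M m j / M m m) = 0 := by
    rw [mul_div_cancel_left₀ _ hm, sub_self, mul_zero]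
  have hcol : (A * M) i m = 0 := by rw [hAM, one_apply_ne i.2]
  calc (delMat A m * M.schurPivot m) i j
      = ∑ k, A i k * (M k j - M k m * M m j / M m m) := by
        rw [Fintype.sum_eq_add_sum_subtype_ne _ m, hpivot, zero_add]
        rfl
    _ = (A * M) i j - (A * M) i m * (M m j / M m m) := by
        simp only [mul_apply, Finset.sum_mul, ← Finset.sum_sub_distrib]
        exact Finset.sum_congr rfl fun k _ => by ring
    _ = (1 : Matrix ι ι ℝ).submatrix Subtype.val Subtype.val i j := by
        rw [hcol, zero_mul, sub_zero, hAM, submatrix_apply]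
    _ = (1 : Matrix {i // i ≠ m} {i // i ≠ m} ℝ) i j := by
        rw [submatrix_one _ Subtype.val_injective]

end Matrix

section

variable {ι : Type*} [Fintype ι] [DecidableEq ι]

theorem IsWDD.schurPivot {M : Matrix ι ι ℝ} (hM : IsWDD M) {m : ι}
    (hoff : ∀ i j, i ≠ j → M i j ≤ 0) (hm : 0 < M m m) : IsWDD (M.schurPivot m) := by
  intro i
  have hcorr : M i m / M m m * ∑ j, M m j ≤ 0 :=
    mul_nonpos_of_nonpos_of_nonneg (div_nonpos_of_nonpos_of_nonneg (hoff _ _ i.2) hm.le) (hM m)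
  rw [sum_schurPivot_apply M hm.ne']
  linarith [hM i]

theorem IsStieltjes.inv_delMat_eq_schurPivot {A : Matrix ι ι ℝ} (hA : IsStieltjes A⁻¹)
    (m : ι) : (delMat A m)⁻¹ = A⁻¹.schurPivot m :=
  Matrix.inv_delMat_eq_schurPivot ((isUnit_iff_isUnit_det A).mp (posDef_inv_iff.mp hA.1).isUnit)
    hA.1.diag_pos.ne'

theorem IsStieltjes.inv_delMat {A : Matrix ι ι ℝ} (hA : IsStieltjes A⁻¹) (m : ι) :
    IsStieltjes (delMat A m)⁻¹ := by
  refine ⟨((posDef_inv_iff.mp hA.1).submatrix Subtype.val_injective).inv, ?_⟩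
  rw [hA.inv_delMat_eq_schurPivot]
  exact fun i j => schurPivot_apply_nonpos hA.2 hA.1.diag_pos.le

theorem IsWDD.inv_delMat {A : Matrix ι ι ℝ} (hW : IsWDD A⁻¹) (hS : IsStieltjes A⁻¹) (m : ι) :
    IsWDD (delMat A m)⁻¹ := by
  rw [hS.inv_delMat_eq_schurPivot]
  exact hW.schurPivot hS.2 hS.1.diag_pos

end

theorem stmt2_general (n : ℕ) (v : Fin (n + 1) → EuclideanSpace ℝ (Fin n))
    (h : ∀ ℓ, IsStieltjes (vGram v ℓ)⁻¹ ∧ IsWDD (vGram v ℓ)⁻¹) :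
    ∀ ℓ (m : {k : Fin (n + 1) // k ≠ ℓ}),
      IsStieltjes (delMat (vGram v ℓ) m)⁻¹ ∧ IsWDD (delMat (vGram v ℓ) m)⁻¹ :=
  fun ℓ m => ⟨(h ℓ).1.inv_delMat m, (h ℓ).2.inv_delMat (h ℓ).1 m⟩

theorem stmt2 (n : ℕ) (hn : 2 ≤ n) (v : Fin (n + 1) → EuclideanSpace ℝ (Fin n))
    (hv : AffineIndependent ℝ v)
    (h : ∀ ℓ, IsStieltjes (vGram v ℓ)⁻¹ ∧ IsWDD (vGram v ℓ)⁻¹) :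
    ∀ ℓ (m : {k : Fin (n + 1) // k ≠ ℓ}),
      IsStieltjes (delMat (vGram v ℓ) m)⁻¹ ∧ IsWDD (delMat (vGram v ℓ) m)⁻¹ :=
  stmt2_general n v h
end
end

section
/- Let A be a symmetric positive definite real n×n matrix whose inverse is a weakly diagonally dominant Stieltjes matrix. Then A = Uᵀ U for some entrywise nonnegative upper triangular n×n matrix U; in particular A is completely positive with cp-rank at most n. -/
/-!
Symmetric Gaussian elimination on the largest index `ℓ` of a Stieltjes matrix `M` is the congruence
by `E = 1 + N`, where `N` is supported in column `ℓ` off the diagonal with entries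
`-M i ℓ / M ℓ ℓ ≥ 0`; it leaves `M ℓ ℓ` at the pivot and the Schur complement elsewhere. The Schur
complement is again Stieltjes (positive definite as a principal submatrix of a congruent matrix,
and its off-diagonal entries only decrease), so by induction on the size some nonnegative upper
triangular `U` satisfies `U * M * Uᵀ = 1`, i.e. `M⁻¹ = Uᵀ * U`. Apply this to `M = A⁻¹`.
-/

open Matrix Finset
open scoped RealInnerProductSpace

noncomputable section

theorem Matrix.mul_apply_nonneg {m n o R : Type*} [Fintype n] [Semiring R] [PartialOrder R]
    [IsOrderedRing R] {A : Matrix m n R} {B : Matrix n o R} (hA : ∀ i j, 0 ≤ A i j)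
    (hB : ∀ i j, 0 ≤ B i j) (i : m) (j : o) : 0 ≤ (A * B) i j :=
  Finset.sum_nonneg fun k _ => mul_nonneg (hA i k) (hB k j)

section Pivot

variable {ι : Type*} [DecidableEq ι]

def elimCol (M : Matrix ι ι ℝ) (ℓ : ι) : Matrix ι ι ℝ :=
  of fun i j => if j = ℓ ∧ i ≠ ℓ then -(M i ℓ / M ℓ ℓ) else 0

def schurCompl (M : Matrix ι ι ℝ) (ℓ : ι) : Matrix {i // i ≠ ℓ} {i // i ≠ ℓ} ℝ :=
  of fun i j => M i j - M i ℓ * M ℓ j / M ℓ ℓ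

def extendDiag (ℓ : ι) (U : Matrix {i // i ≠ ℓ} {i // i ≠ ℓ} ℝ) (a : ℝ) : Matrix ι ι ℝ :=
  of fun i j => if hi : i = ℓ then (if j = ℓ then a else 0)
    else if hj : j = ℓ then 0 else U ⟨i, hi⟩ ⟨j, hj⟩

variable {ℓ : ι}

lemma transpose_extendDiag (U : Matrix {i // i ≠ ℓ} {i // i ≠ ℓ} ℝ) (a : ℝ) :
    (extendDiag ℓ U a)ᵀ = extendDiag ℓ Uᵀ a := by
  ext i j
  by_cases hi : i = ℓ <;> by_cases hj : j = ℓ <;> simp [extendDiag, hi, hj]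

lemma extendDiag_one_one : extendDiag ℓ (1 : Matrix {i // i ≠ ℓ} {i // i ≠ ℓ} ℝ) 1 = 1 := by
  ext i j
  by_cases hi : i = ℓ <;> by_cases hj : j = ℓ <;> simp [extendDiag, hi, hj, one_apply, Ne.symm]

lemma delMat_extendDiag (U : Matrix {i // i ≠ ℓ} {i // i ≠ ℓ} ℝ) (a : ℝ) :
    delMat (extendDiag ℓ U a) ℓ = U := by
  ext i j
  simp [delMat, extendDiag, i.2, j.2]

variable [Fintype ι]

lemma extendDiag_mul (U V : Matrix {i // i ≠ ℓ} {i // i ≠ ℓ} ℝ) (a b : ℝ) :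
    extendDiag ℓ U a * extendDiag ℓ V b = extendDiag ℓ (U * V) (a * b) := by
  have hne : ∀ k : {k // k ≠ ℓ}, (k : ι) = ℓ ↔ False := fun k => iff_false_intro k.2
  ext i j
  rw [mul_apply, Fintype.sum_eq_add_sum_subtype_ne _ ℓ]
  by_cases hi : i = ℓ <;> by_cases hj : j = ℓ <;> simp [extendDiag, hi, hj, hne, mul_apply]

lemma elimCol_mul_self (M : Matrix ι ι ℝ) : elimCol M ℓ * elimCol M ℓ = 0 := by
  ext i j
  refine Finset.sum_eq_zero fun k _ => ?_
  by_cases hk : k = ℓ <;> simp [elimCol, hk]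

lemma elimCol_mul_apply (M X : Matrix ι ι ℝ) (i j : ι) :
    (elimCol M ℓ * X) i j = if i = ℓ then 0 else -(M i ℓ / M ℓ ℓ) * X ℓ j := by
  by_cases hi : i = ℓ <;> simp [elimCol, mul_apply, hi]

lemma mul_transpose_elimCol_apply (M X : Matrix ι ι ℝ) (i j : ι) :
    (X * (elimCol M ℓ)ᵀ) i j = if j = ℓ then 0 else X i ℓ * -(M j ℓ / M ℓ ℓ) := by
  by_cases hj : j = ℓ <;> simp [elimCol, mul_apply, hj]

lemma one_add_elimCol_mul_mul_transpose {M : Matrix ι ι ℝ} (hM : M.IsSymm) (hd : M ℓ ℓ ≠ 0) :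
    (1 + elimCol M ℓ) * M * (1 + elimCol M ℓ)ᵀ = extendDiag ℓ (schurCompl M ℓ) (M ℓ ℓ) := by
  ext i j
  simp only [transpose_add, transpose_one, add_mul, mul_add, one_mul, mul_one, Matrix.add_apply,
    elimCol_mul_apply, mul_transpose_elimCol_apply]
  rw [hM.apply ℓ j]
  by_cases hi : i = ℓ <;> by_cases hj : j = ℓ <;> simp [extendDiag, schurCompl, hi, hj] <;>
    field_simp <;> ring

lemma isUnit_one_add_elimCol (M : Matrix ι ι ℝ) (ℓ : ι) : IsUnit (1 + elimCol M ℓ) :=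
  IsNilpotent.isUnit_one_add ⟨2, by rw [sq, elimCol_mul_self]⟩

theorem IsStieltjes.schurCompl {M : Matrix ι ι ℝ} (hM : IsStieltjes M) (ℓ : ι) :
    IsStieltjes (schurCompl M ℓ) := by
  obtain ⟨hpos, hoff⟩ := hM
  refine ⟨?_, fun i j hij => ?_⟩
  · rw [← delMat_extendDiag (_root_.schurCompl M ℓ) (M ℓ ℓ),
      ← one_add_elimCol_mul_mul_transpose (isHermitian_iff_isSymm.1 hpos.isHermitian)
        hpos.diag_pos.ne', ← conjTranspose_eq_transpose_of_trivial]
    exact (hpos.mul_mul_conjTranspose_same (vecMul_injective_iff_isUnit.2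
      (isUnit_one_add_elimCol M ℓ))).submatrix Subtype.val_injective
  · have hcc : 0 ≤ M i ℓ * M ℓ j :=
      mul_nonneg_of_nonpos_of_nonpos (hoff _ _ i.2) (hoff _ _ (Ne.symm j.2))
    have hij' : M i j ≤ 0 := hoff _ _ (Subtype.coe_ne_coe.2 hij)
    have := div_nonneg hcc (hpos.diag_pos (i := ℓ)).le
    simp only [_root_.schurCompl, of_apply]
    linarith

end Pivot

section Triangular

variable {ι : Type*} [LinearOrder ι] {ℓ : ι}

lemma extendDiag_nonneg {U : Matrix {i // i ≠ ℓ} {i // i ≠ ℓ} ℝ} {a : ℝ}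
    (hU : ∀ i j, 0 ≤ U i j) (ha : 0 ≤ a) (i j : ι) : 0 ≤ extendDiag ℓ U a i j := by
  simp only [extendDiag, of_apply]
  split_ifs <;> simp [*]

lemma isUpperTriangular_extendDiag (hℓ : ∀ i, i ≤ ℓ) {U : Matrix {i // i ≠ ℓ} {i // i ≠ ℓ} ℝ}
    (hU : U.IsUpperTriangular) (a : ℝ) : (extendDiag ℓ U a).IsUpperTriangular := by
  intro i j hji
  have hj : j ≠ ℓ := (hji.trans_le (hℓ i)).ne
  by_cases hi : i = ℓ
  · simp [extendDiag, hi, hj]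
  · simpa [extendDiag, hi, hj] using hU (show (⟨j, hj⟩ : {i // i ≠ ℓ}) < ⟨i, hi⟩ from hji)

lemma isUpperTriangular_one_add_elimCol (hℓ : ∀ i, i ≤ ℓ) (M : Matrix ι ι ℝ) :
    (1 + elimCol M ℓ).IsUpperTriangular := by
  intro i j (hji : j < i)
  have hj : j ≠ ℓ := (hji.trans_le (hℓ i)).ne
  rw [Matrix.add_apply, one_apply_ne hji.ne']
  simp [elimCol, hj]

lemma IsStieltjes.one_add_elimCol_nonneg [Fintype ι] {M : Matrix ι ι ℝ} (hM : IsStieltjes M)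
    (i j : ι) : 0 ≤ (1 + elimCol M ℓ) i j := by
  by_cases hij : i = j
  · simp [elimCol, hij]
  · rw [Matrix.add_apply, one_apply_ne hij, zero_add]
    by_cases hiℓ : i = ℓ
    · simp [elimCol, hiℓ]
    · have : M i ℓ / M ℓ ℓ ≤ 0 := div_nonpos_of_nonpos_of_nonneg (hM.2 i ℓ hiℓ) hM.1.diag_pos.le
      simp only [elimCol, of_apply]
      split_ifs <;> linarith

end Triangular

theorem IsStieltjes.exists_nonneg_isUpperTriangular_mul_mul_transpose_eq_one {ι : Type*}
    [Fintype ι] [LinearOrder ι] {M : Matrix ι ι ℝ} (hM : IsStieltjes M) :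
    ∃ U : Matrix ι ι ℝ, (∀ i j, 0 ≤ U i j) ∧ U.IsUpperTriangular ∧ U * M * Uᵀ = 1 := by
  induction h : Fintype.card ι generalizing ι with
  | zero =>
    have := Fintype.card_eq_zero_iff.1 h
    exact ⟨1, isEmptyElim, fun i => isEmptyElim i, Subsingleton.elim _ _⟩
  | succ n ih =>
    have : Nonempty ι := Fintype.card_pos_iff.1 (h ▸ n.succ_pos)
    obtain ⟨ℓ, hℓ⟩ := Finite.exists_max (id : ι → ι)
    have hd : 0 < M ℓ ℓ := hM.1.diag_pos
    obtain ⟨U, hU0, hUtri, hU⟩ := ih (hM.schurCompl ℓ)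
      (by rw [Fintype.card_subtype_compl, h, Fintype.card_subtype_eq, Nat.add_sub_cancel])
    set D := extendDiag ℓ U (√(M ℓ ℓ))⁻¹
    set E := 1 + elimCol M ℓ
    refine ⟨D * E,
      mul_apply_nonneg (extendDiag_nonneg hU0 (by positivity)) hM.one_add_elimCol_nonneg,
      (isUpperTriangular_extendDiag hℓ hUtri _).mul (isUpperTriangular_one_add_elimCol hℓ M), ?_⟩
    have hscale : (√(M ℓ ℓ))⁻¹ * M ℓ ℓ * (√(M ℓ ℓ))⁻¹ = 1 := by
      rw [mul_right_comm, ← mul_inv, Real.mul_self_sqrt hd.le, inv_mul_cancel₀ hd.ne']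
    calc D * E * M * (D * E)ᵀ = D * (E * M * Eᵀ) * Dᵀ := by
          simp only [transpose_mul, Matrix.mul_assoc]
      _ = 1 := by
          rw [one_add_elimCol_mul_mul_transpose (isHermitian_iff_isSymm.1 hM.1.isHermitian) hd.ne',
            transpose_extendDiag, extendDiag_mul, extendDiag_mul, hU, hscale]
          -- the two `1`s carry different `DecidableEq` instances on the subtype
          convert extendDiag_one_one

theorem IsStieltjes.exists_nonneg_isUpperTriangular_inv_eq {ι : Type*} [Fintype ι]
    [LinearOrder ι] {M : Matrix ι ι ℝ} (hM : IsStieltjes M) :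
    ∃ U : Matrix ι ι ℝ, (∀ i j, 0 ≤ U i j) ∧ U.IsUpperTriangular ∧ M⁻¹ = Uᵀ * U := by
  obtain ⟨U, hU0, hUtri, hU⟩ := hM.exists_nonneg_isUpperTriangular_mul_mul_transpose_eq_one
  have hMU : M * (Uᵀ * U) = 1 := by
    rw [← Matrix.mul_assoc]
    exact mul_eq_one_comm.1 (by rwa [← Matrix.mul_assoc])
  exact ⟨U, hU0, hUtri, inv_eq_left_inv (mul_eq_one_comm.1 hMU)⟩

theorem stmt3_general (n : ℕ) (A : Matrix (Fin n) (Fin n) ℝ)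
    (h1 : IsStieltjes A⁻¹) :
    ∃ U : Matrix (Fin n) (Fin n) ℝ,
      (∀ i j, 0 ≤ U i j) ∧ (∀ i j : Fin n, j < i → U i j = 0) ∧ A = Uᵀ * U := by
  obtain ⟨U, hU0, hUtri, hU⟩ := h1.exists_nonneg_isUpperTriangular_inv_eq
  have hA : IsUnit A.det := isUnit_nonsing_inv_det_iff.1 h1.1.det_pos.ne'.isUnit
  exact ⟨U, hU0, fun _ _ hji => hUtri hji, by rw [← hU, nonsing_inv_nonsing_inv A hA]⟩

theorem stmt3 (n : ℕ) (A : Matrix (Fin n) (Fin n) ℝ) (hA : A.PosDef)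
    (h1 : IsStieltjes A⁻¹) (h2 : IsWDD A⁻¹) :
    ∃ U : Matrix (Fin n) (Fin n) ℝ,
      (∀ i j, 0 ≤ U i j) ∧ (∀ i j : Fin n, j < i → U i j = 0) ∧ A = Uᵀ * U :=
  stmt3_general n A h1
end
end

section
/- Let n ≥ 2 and let v_0,…,v_n be affinely independent points in ℝ^n forming an n-simplex S all of whose facets are nonobtuse, and for each j let q_j be an inward normal to the facet F_j. Then for each i ∈ {0,…,n} there is at most one index j ≠ i with ⟨q_i, q_j⟩ > 0 (each facet makes at most one obtuse dihedral angle with the remaining facets); consequently the number of unordered pairs {i, j} with ⟨q_i, q_j⟩ > 0 is at most ⌊(n+1)/2⌋. -/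
open Matrix Finset
open scoped RealInnerProductSpace

noncomputable section

/-- extract weights from convex hull membership -/
lemma aux_hull {n : ℕ} {v : Fin (n + 1) → EuclideanSpace ℝ (Fin n)}
    (hinj : Function.Injective v) {t : Finset (Fin (n + 1))} {x : EuclideanSpace ℝ (Fin n)}
    (hx : x ∈ convexHull ℝ (v '' ↑t)) :
    ∃ ν : Fin (n + 1) → ℝ, (∀ k, 0 ≤ ν k) ∧ (∑ k ∈ t, ν k = 1) ∧ ∑ k ∈ t, ν k • v k = x := by
  classical
  rw [← Finset.coe_image, Finset.mem_convexHull'] at hx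
  obtain ⟨w, hw0, hw1, hw2⟩ := hx
  have hitr : ∀ x ∈ t, ∀ y ∈ t, v x = v y → x = y := fun a _ b _ h => hinj h
  refine ⟨fun k => if k ∈ t then w (v k) else 0, ?_, ?_, ?_⟩
  · intro k; dsimp only; split_ifs with h
    · exact hw0 _ (Finset.mem_image_of_mem v h)
    · exact le_refl 0
  · have e1 := Finset.sum_image (s := t) (g := v) (f := w) hitr
    rw [Finset.sum_congr rfl (fun k hk => if_pos hk), ← e1]
    exact hw1
  · have e2 := Finset.sum_image (s := t) (g := v) (f := fun y => w y • y) hitr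
    rw [Finset.sum_congr rfl (fun (k : Fin (n+1)) hk =>
      (by rw [if_pos hk] : (if k ∈ t then w (v k) else 0) • v k = w (v k) • v k)), ← e2]
    exact hw2

set_option maxHeartbeats 1000000 in
/-- main geometric lemma: each facet has at most one obtuse dihedral angle -/
lemma atMostOne {n : ℕ} (hn : 2 ≤ n) (v : Fin (n + 1) → EuclideanSpace ℝ (Fin n))
    (hv : AffineIndependent ℝ v) (hfac : FacetsNonobtuse v)
    (q : Fin (n + 1) → EuclideanSpace ℝ (Fin n)) (hq : ∀ j, IsInwardNormal v j (q j))
    (i j j' : Fin (n + 1)) (hj : j ≠ i) (hj' : j' ≠ i)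
    (h1 : 0 < ⟪q i, q j⟫) (h2 : 0 < ⟪q i, q j'⟫) : j = j' := by
  classical
  by_contra hne
  have hvinj := hv.injective
  -- Step 1: projection of v i onto the affine span of the other vertices, with barycentric coords
  set pts : {k : Fin (n + 1) // k ≠ i} → EuclideanSpace ℝ (Fin n) := fun k => v k.1 with hpts
  haveI : Nonempty {k : Fin (n + 1) // k ≠ i} := ⟨⟨j, hj⟩⟩
  set S : AffineSubspace ℝ (EuclideanSpace ℝ (Fin n)) := affineSpan ℝ (Set.range pts) with hS
  haveI : Nonempty S := ((affineSpan_nonempty ℝ).mpr (Set.range_nonempty pts)).to_subtype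
  set c : EuclideanSpace ℝ (Fin n) := (EuclideanGeometry.orthogonalProjection S (v i) : EuclideanSpace ℝ (Fin n)) with hc
  have horth0 : v i - c ∈ S.directionᗮ := by
    have := EuclideanGeometry.vsub_orthogonalProjection_mem_direction_orthogonal S (v i)
    rwa [vsub_eq_sub] at this
  have hmemdir : ∀ a b : Fin (n + 1), a ≠ i → b ≠ i → v a - v b ∈ S.direction := by
    intro a b ha hb
    have h0 : pts ⟨a, ha⟩ -ᵥ pts ⟨b, hb⟩ ∈ vectorSpan ℝ (Set.range pts) :=
      vsub_mem_vectorSpan ℝ (Set.mem_range_self _) (Set.mem_range_self _)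
    simpa [hpts, vsub_eq_sub, hS, direction_affineSpan] using h0
  have hcorth : ∀ a b : Fin (n + 1), a ≠ i → b ≠ i → ⟪v i - c, v a - v b⟫ = 0 := by
    intro a b ha hb
    exact (Submodule.mem_orthogonal' _ _).mp horth0 _ (hmemdir a b ha hb)
  -- barycentric coordinates
  have hcS : c ∈ S := EuclideanGeometry.orthogonalProjection_mem (v i)
  obtain ⟨w, hw1, hw2⟩ := eq_affineCombination_of_mem_affineSpan_of_fintype hcS
  rw [Finset.affineCombination_eq_linear_combination _ _ _ hw1] at hw2
  set lam : Fin (n + 1) → ℝ := fun k => if h : k = i then 0 else w ⟨k, h⟩ with hlam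
  have hlami : lam i = 0 := by simp [hlam]
  have hsubty : ∀ f : Fin (n + 1) → EuclideanSpace ℝ (Fin n),
      ∑ k : {k : Fin (n+1) // k ≠ i}, w k • f k.1 = ∑ k, lam k • f k := by
    intro f
    rw [← Finset.sum_erase (Finset.univ) (a := i) (by simp [hlami]),
      Finset.sum_subtype (p := fun k => k ≠ i) _ (by simp) (fun k => lam k • f k)]
    apply Finset.sum_congr rfl
    intro x _
    simp [hlam, x.2]
  have hlamsum : ∑ k, lam k = 1 := by
    rw [← hw1, ← Finset.sum_erase (Finset.univ) (a := i) hlami,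
      Finset.sum_subtype (p := fun k => k ≠ i) _ (by simp) lam]
    apply Finset.sum_congr rfl
    intro x _
    simp [hlam, x.2]
  have hceq : c = ∑ k, lam k • v k := by rw [hw2, hsubty]
  -- Step 2: q i is a positive multiple of v i - c
  set W : Submodule ℝ (EuclideanSpace ℝ (Fin n)) := S.direction with hW
  have hWrank : Module.finrank ℝ W = n - 1 := by
    have hAI : AffineIndependent ℝ pts := hv.comp_embedding (Function.Embedding.subtype _)
    have hcard : Fintype.card {k : Fin (n+1) // k ≠ i} = n := by
      simp [Fintype.card_subtype_compl]
    have h := hAI.finrank_vectorSpan (n := n - 1) (by omega)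
    rw [hW, hS, direction_affineSpan]
    exact h
  have hWorank : Module.finrank ℝ (↥Wᗮ) = 1 := by
    have h := W.finrank_add_finrank_orthogonal
    rw [finrank_euclideanSpace_fin] at h
    omega
  have hqiW : q i ∈ Wᗮ := by
    rw [Submodule.mem_orthogonal]
    intro u hu
    rw [hW, hS, direction_affineSpan, vectorSpan_def] at hu
    induction hu using Submodule.span_induction with
    | mem x hx =>
        obtain ⟨y1, hy1, y2, hy2, rfl⟩ := Set.mem_vsub.mp hx
        obtain ⟨a, rfl⟩ := hy1
        obtain ⟨b, rfl⟩ := hy2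
        rw [real_inner_comm, vsub_eq_sub]
        exact (hq i).2.1 a.1 b.1 a.2 b.2
    | zero => simp
    | add x y _ _ hx hy => rw [inner_add_left, hx, hy, add_zero]
    | smul a x _ hx => rw [real_inner_smul_left, hx, mul_zero]
  have hu0 : v i - c ≠ 0 := by
    intro h
    have hvic : v i = c := by rwa [sub_eq_zero] at h
    have hvi : v i ∈ S := hvic ▸ hcS
    have hnm := hv.notMem_affineSpan_diff i Set.univ
    apply hnm
    have hsub : Set.range pts ⊆ v '' (Set.univ \ {i}) := by
      rintro _ ⟨k, rfl⟩; exact ⟨k.1, ⟨trivial, k.2⟩, rfl⟩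
    exact affineSpan_mono ℝ hsub hvi
  obtain ⟨t, ht⟩ := (finrank_eq_one_iff_of_nonzero' (⟨v i - c, horth0⟩ : Wᗮ)
      (by simpa using hu0)).mp hWorank ⟨q i, hqiW⟩
  have hqit : q i = t • (v i - c) := by
    have h := congrArg Subtype.val ht
    simpa using h.symm
  have hip1 : 0 < ⟪q i, v i - v j⟫ := (hq i).2.2 j hj
  have hkc : ⟪q i, v j - c⟫ = 0 := by
    have hrep : v j - c = ∑ k, lam k • (v j - v k) := by
      rw [hceq]
      rw [Finset.sum_congr rfl (fun (k : Fin (n+1)) _ =>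
        (smul_sub (lam k) (v j) (v k) : lam k • (v j - v k) = _)), Finset.sum_sub_distrib,
        ← Finset.sum_smul, hlamsum, one_smul]
    rw [hrep, inner_sum]
    apply Finset.sum_eq_zero
    intro k _
    rcases eq_or_ne k i with rfl | hk
    · simp [hlami]
    · rw [real_inner_smul_right, (hq i).2.1 j k hj hk, mul_zero]
  have hposic : 0 < ⟪q i, v i - c⟫ := by
    have hr : v i - c = (v i - v j) + (v j - c) := by abel
    rw [hr, inner_add_right, hkc, add_zero]
    exact hip1
  have htpos : 0 < t := by
    rw [hqit, real_inner_smul_left] at hposic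
    have h2 : (0:ℝ) < ⟪v i - c, v i - c⟫ :=
      lt_of_le_of_ne real_inner_self_nonneg (fun h => hu0 (inner_self_eq_zero.mp h.symm))
    nlinarith
  -- Step 3: obtuse dihedral angles force negative barycentric coordinates
  have hvicrep : v i - c = ∑ k, lam k • (v i - v k) := by
    rw [hceq]
    rw [Finset.sum_congr rfl (fun (k : Fin (n+1)) _ =>
      (smul_sub (lam k) (v i) (v k) : lam k • (v i - v k) = _)), Finset.sum_sub_distrib,
      ← Finset.sum_smul, hlamsum, one_smul]
  have hlamneg : ∀ jj, jj ≠ i → 0 < ⟪q i, q jj⟫ → lam jj < 0 := by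
    intro jj hjj hposj
    have hji : i ≠ jj := Ne.symm hjj
    have hinner : ⟪v i - c, q jj⟫ = lam jj * ⟪v i - v jj, q jj⟫ := by
      rw [hvicrep, sum_inner]
      rw [Finset.sum_eq_single jj]
      · rw [real_inner_smul_left]
      · intro k _ hk
        rw [real_inner_smul_left, real_inner_comm, (hq jj).2.1 i k hji hk, mul_zero]
      · simp
    have hne2 : ⟪v i - v jj, q jj⟫ < 0 := by
      have h3 := (hq jj).2.2 i hji
      have h4 : ⟪v i - v jj, q jj⟫ = -⟪q jj, v jj - v i⟫ := by
        rw [real_inner_comm, show v i - v jj = -(v jj - v i) by abel, inner_neg_right]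
      rw [h4]
      linarith
    have h5 : ⟪q i, q jj⟫ = t * (lam jj * ⟪v i - v jj, q jj⟫) := by
      rw [hqit, real_inner_smul_left, hinner]
    by_contra hcon
    push_neg at hcon
    have h6 : t * (lam jj * ⟪v i - v jj, q jj⟫) ≤ 0 :=
      mul_nonpos_of_nonneg_of_nonpos htpos.le (mul_nonpos_of_nonneg_of_nonpos hcon hne2.le)
    linarith
  have hlamj : lam j < 0 := hlamneg j hj h1
  have hlamj' : lam j' < 0 := hlamneg j' hj' h2
  -- Step 4: contradiction using the nonobtuse facets
  set K : Finset (Fin (n+1)) := Finset.univ.filter (fun k => k ≠ i ∧ k ≠ j) with hK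
  have hKset : ((K : Set (Fin (n+1)))) = {k | k ≠ i ∧ k ≠ j} := by
    ext k; simp [hK]
  have hKset2 : ((K : Set (Fin (n+1)))) = {k | k ≠ j ∧ k ≠ i} := by
    ext k; simp [hK]; tauto
  have hj'K : j' ∈ K := by simp [hK, hj', Ne.symm hne]
  obtain ⟨p, hp_hull, hp_orth⟩ := hfac i j (Ne.symm hj)
  obtain ⟨m, hm_hull, hm_orth⟩ := hfac j i hj
  rw [show {k | k ≠ i ∧ k ≠ j} = (K : Set (Fin (n+1))) from hKset.symm] at hp_hull
  rw [show {k | k ≠ j ∧ k ≠ i} = (K : Set (Fin (n+1))) from hKset2.symm] at hm_hull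
  obtain ⟨ν, hν0, hν1, hνp⟩ := aux_hull hvinj hp_hull
  obtain ⟨μ, hμ0, hμ1, hμm⟩ := aux_hull hvinj hm_hull
  set ω : Fin (n+1) → ℝ := fun k => lam k - ν k + lam j * μ k with hω
  have hsplit : ∀ f : Fin (n+1) → ℝ, ∑ k, f k = ∑ k ∈ K, f k + (f i + f j) := by
    intro f
    have e1 : Finset.univ.filter (fun k => ¬(k ≠ i ∧ k ≠ j)) = {i, j} := by
      ext k
      simp only [Finset.mem_filter, Finset.mem_univ, true_and, Finset.mem_insert,
        Finset.mem_singleton, not_and, not_not, ne_eq]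
      tauto
    rw [hK, ← Finset.sum_filter_add_sum_filter_not Finset.univ (fun k => k ≠ i ∧ k ≠ j) f, e1,
      Finset.sum_pair (Ne.symm hj)]
  have hsplitV : ∀ f : Fin (n+1) → EuclideanSpace ℝ (Fin n),
      ∑ k, f k = ∑ k ∈ K, f k + (f i + f j) := by
    intro f
    have e1 : Finset.univ.filter (fun k => ¬(k ≠ i ∧ k ≠ j)) = {i, j} := by
      ext k
      simp only [Finset.mem_filter, Finset.mem_univ, true_and, Finset.mem_insert,
        Finset.mem_singleton, not_and, not_not, ne_eq]
      tauto
    rw [hK, ← Finset.sum_filter_add_sum_filter_not Finset.univ (fun k => k ≠ i ∧ k ≠ j) f, e1,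
      Finset.sum_pair (Ne.symm hj)]
  have hc' : c = ∑ k ∈ K, lam k • v k + lam j • v j := by
    rw [hceq, hsplitV (fun k => lam k • v k), hlami, zero_smul, zero_add]
  have hlamK : ∑ k ∈ K, lam k = 1 - lam j := by
    have := hsplit lam
    rw [hlamsum, hlami] at this
    linarith
  have hsum0 : ∑ k ∈ K, ω k = 0 := by
    have e : ∑ k ∈ K, ω k = ∑ k ∈ K, lam k - ∑ k ∈ K, ν k + lam j * ∑ k ∈ K, μ k := by
      rw [hω, Finset.mul_sum, ← Finset.sum_sub_distrib, ← Finset.sum_add_distrib]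
    rw [e, hlamK, hν1, hμ1]
    ring
  have hdrep : (∑ k ∈ K, ω k • v k) = c - p - lam j • (v j - m) := by
    rw [hc', ← hνp, ← hμm, smul_sub, Finset.smul_sum]
    rw [Finset.sum_congr rfl (fun (k : Fin (n+1)) _ =>
      (by rw [add_smul, sub_smul, mul_smul] :
        ω k • v k = lam k • v k - ν k • v k + lam j • μ k • v k))]
    rw [Finset.sum_add_distrib, Finset.sum_sub_distrib]
    abel
  have hdorth : ∀ a ∈ K, ∀ b ∈ K, ⟪c - p - lam j • (v j - m), v a - v b⟫ = 0 := by
    intro a ha b hb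
    have haK : a ≠ i ∧ a ≠ j := by simpa [hK] using ha
    have hbK : b ≠ i ∧ b ≠ j := by simpa [hK] using hb
    have e1 : ⟪v i - p, v a - v b⟫ = 0 :=
      hp_orth a ⟨haK.1, haK.2⟩ b ⟨hbK.1, hbK.2⟩
    have e2 : ⟪v i - c, v a - v b⟫ = 0 := hcorth a b haK.1 hbK.1
    have e3 : ⟪v j - m, v a - v b⟫ = 0 :=
      hm_orth a ⟨haK.2, haK.1⟩ b ⟨hbK.2, hbK.1⟩
    have e4 : c - p - lam j • (v j - m) = (v i - p) - (v i - c) - lam j • (v j - m) := by abel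
    rw [e4, inner_sub_left, inner_sub_left, real_inner_smul_left, e1, e2, e3]
    ring
  set d : EuclideanSpace ℝ (Fin n) := ∑ k ∈ K, ω k • v k with hd
  have hdinner : ∀ k ∈ K, ⟪v k - v j', d⟫ = 0 := by
    intro k hk
    rw [hdrep, real_inner_comm]
    exact hdorth k hk j' hj'K
  have hdd : ⟪d, d⟫ = 0 := by
    calc ⟪d, d⟫ = ∑ k ∈ K, ω k * ⟪v k, d⟫ := by
          nth_rewrite 1 [hd]
          rw [sum_inner]
          exact Finset.sum_congr rfl fun k _ => real_inner_smul_left _ _ _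
    _ = ∑ k ∈ K, ω k * ⟪v j', d⟫ := Finset.sum_congr rfl (fun k hk => by
          have h1 : ⟪v k, d⟫ = ⟪v k - v j', d⟫ + ⟪v j', d⟫ := by
            rw [inner_sub_left]; ring
          rw [h1, hdinner k hk, zero_add])
    _ = (∑ k ∈ K, ω k) * ⟪v j', d⟫ := (Finset.sum_mul _ _ _).symm
    _ = 0 := by rw [hsum0, zero_mul]
  have hdzero : d = 0 := inner_self_eq_zero.mp hdd
  have hωj' : ω j' = 0 :=
    affineIndependent_iff.mp hv K ω hsum0 (hd ▸ hdzero) j' hj'K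
  have hων : lam j' - ν j' + lam j * μ j' = 0 := hωj'
  have hm1 : 0 ≤ -(lam j) * μ j' := mul_nonneg (by linarith) (hμ0 j')
  nlinarith [hν0 j']

end

theorem stmt4 (n : ℕ) (hn : 2 ≤ n) (v : Fin (n + 1) → EuclideanSpace ℝ (Fin n))
    (hv : AffineIndependent ℝ v) (hfac : FacetsNonobtuse v)
    (q : Fin (n + 1) → EuclideanSpace ℝ (Fin n)) (hq : ∀ j, IsInwardNormal v j (q j)) :
    (∀ i j j' : Fin (n + 1), j ≠ i → j' ≠ i →
        0 < ⟪q i, q j⟫ → 0 < ⟪q i, q j'⟫ → j = j') ∧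
    {p : Fin (n + 1) × Fin (n + 1) | p.1 < p.2 ∧ 0 < ⟪q p.1, q p.2⟫}.ncard ≤ (n + 1) / 2 := by
  classical
  have huniq : ∀ i j j' : Fin (n + 1), j ≠ i → j' ≠ i →
      0 < ⟪q i, q j⟫ → 0 < ⟪q i, q j'⟫ → j = j' :=
    fun i j j' a b c d => atMostOne hn v hv hfac q hq i j j' a b c d
  refine ⟨huniq, ?_⟩
  set E : Finset (Fin (n+1) × Fin (n+1)) :=
    Finset.univ.filter (fun p => p.1 < p.2 ∧ 0 < ⟪q p.1, q p.2⟫) with hE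
  have hSE : {p : Fin (n + 1) × Fin (n + 1) | p.1 < p.2 ∧ 0 < ⟪q p.1, q p.2⟫}
      = (E : Set (Fin (n+1) × Fin (n+1))) := by
    ext p; simp [hE]
  rw [hSE, Set.ncard_coe_finset]
  have hmem : ∀ p ∈ E, p.1 < p.2 ∧ 0 < ⟪q p.1, q p.2⟫ := by
    intro p hp; simpa [hE] using hp
  have hdisj : ∀ p ∈ E, ∀ p' ∈ E, p ≠ p' →
      Disjoint ({p.1, p.2} : Finset (Fin (n+1))) {p'.1, p'.2} := by
    intro p hp p' hp' hnep
    obtain ⟨hlt, hpos⟩ := hmem p hp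
    obtain ⟨hlt', hpos'⟩ := hmem p' hp'
    rw [Finset.disjoint_left]
    intro a ha ha'
    simp only [Finset.mem_insert, Finset.mem_singleton] at ha ha'
    rcases ha with h1 | h1 <;> rcases ha' with h2 | h2
    · apply hnep
      have hp11 : p.1 = p'.1 := h1.symm.trans h2
      have hne2 : p'.2 ≠ p.1 := by rw [hp11]; exact ne_of_gt hlt'
      have hpos'' : 0 < ⟪q p.1, q p'.2⟫ := by rw [hp11]; exact hpos'
      exact Prod.ext hp11 (huniq p.1 p.2 p'.2 (ne_of_gt hlt) hne2 hpos hpos'')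
    · exfalso
      have h21 : p'.2 = p.1 := h2.symm.trans h1
      have hq' : 0 < ⟪q p.1, q p'.1⟫ := by
        rw [real_inner_comm, ← h21]; exact hpos'
      have h22 : p'.1 ≠ p.1 := by rw [← h21]; exact ne_of_lt hlt'
      have heq := huniq p.1 p.2 p'.1 (ne_of_gt hlt) h22 hpos hq'
      have : p.1 < p.1 := by
        calc p.1 < p.2 := hlt
        _ = p'.1 := heq
        _ < p'.2 := hlt'
        _ = p.1 := h21
      exact lt_irrefl _ this
    · exfalso
      have h31 : p.2 = p'.1 := h1.symm.trans h2
      have hqa : 0 < ⟪q p.2, q p.1⟫ := by rw [real_inner_comm]; exact hpos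
      have hqb : 0 < ⟪q p.2, q p'.2⟫ := by rw [h31]; exact hpos'
      have hne3 : p'.2 ≠ p.2 := by rw [h31]; exact ne_of_gt hlt'
      have heq := huniq p.2 p.1 p'.2 (ne_of_lt hlt) hne3 hqa hqb
      have : p.1 < p.1 := by
        calc p.1 < p.2 := hlt
        _ = p'.1 := h31
        _ < p'.2 := hlt'
        _ = p.1 := heq.symm
      exact lt_irrefl _ this
    · apply hnep
      have h41 : p.2 = p'.2 := h1.symm.trans h2
      have hqa : 0 < ⟪q p.2, q p.1⟫ := by rw [real_inner_comm]; exact hpos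
      have hqb : 0 < ⟪q p.2, q p'.1⟫ := by
        rw [h41, real_inner_comm]; exact hpos'
      have hne4 : p'.1 ≠ p.2 := by rw [h41]; exact ne_of_lt hlt'
      exact Prod.ext (huniq p.2 p.1 p'.1 (ne_of_lt hlt) hne4 hqa hqb) h41
  have hcard : (E.biUnion (fun p => {p.1, p.2})).card = 2 * E.card := by
    rw [Finset.card_biUnion hdisj,
      Finset.sum_congr rfl (fun p hp => Finset.card_pair (ne_of_lt (hmem p hp).1))]
    rw [Finset.sum_const, smul_eq_mul, mul_comm]
  have hle : 2 * E.card ≤ n + 1 := by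
    rw [← hcard]
    exact le_trans (Finset.card_le_univ _) (by simp)
  omega
end

section
/- Let n ≥ 2 be even and let v_0,…,v_n be affinely independent points in ℝ^n forming an n-simplex S all of whose facets are nonobtuse. Then there exists ℓ ∈ {0,…,n} such that the vertex Gramian G_ℓ of S satisfies G_ℓ⁻¹ e ≥ 0 entrywise (where e is the all-ones vector), i.e., the equation G_ℓ x = e has a nonnegative solution. -/
open Matrix Finset
open scoped RealInnerProductSpace

noncomputable section

private lemma stmt6_parity {m : ℕ} (hm : Odd m) (σ : Fin m → Fin m)
    (hinv : Function.Involutive σ) (hne : ∀ x, σ x ≠ x) : False := by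
  classical
  set f : Function.End (Fin m) := σ with hf
  have hsq : f ^ 2 ^ 1 = 1 := by
    have h1 : f * f = 1 := funext fun x => hinv x
    simpa [pow_succ, pow_one] using h1
  have hmod := Equiv.Perm.card_fixedPoints_modEq (p := 2) (n := 1) hsq
  have hempty : IsEmpty f.fixedPoints := ⟨fun ⟨x, hx⟩ => hne x hx⟩
  rw [Fintype.card_fin, @Fintype.card_eq_zero _ _ hempty] at hmod
  have : 2 ∣ m := (Nat.modEq_zero_iff_dvd).mp hmod
  exact (Nat.not_even_iff_odd.mpr hm) (even_iff_two_dvd.mpr this)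

private lemma stmt6_star_alg (A Q c ci cj α β : ℝ) (hQ : 0 < Q) (hCS : c ^ 2 < A * Q)
    (heq1 : α * A + β * c = 1) (heq2 : α * c + β * Q = 0) (hle : α * ci + β * cj ≤ 0) :
    ci * Q ≤ c * cj := by
  have hkey : α * (A * Q - c ^ 2) = Q := by linear_combination Q * heq1 - c * heq2
  have hα : 0 < α := by nlinarith
  have hbQ : β * Q = -(α * c) := by linarith
  have h6 : β * Q * cj = -(α * c) * cj := by rw [hbQ]
  have h5 : α * (ci * Q) ≤ α * (c * cj) := by
    nlinarith [mul_le_mul_of_nonneg_right hle hQ.le, h6]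
  exact le_of_mul_le_mul_left h5 hα

private lemma stmt6_triple_alg (Qi Qj Qk a b d : ℝ) (hQi : 0 < Qi) (hQj : 0 < Qj) (hQk : 0 < Qk)
    (ha : 0 < a) (hb : 0 < b)
    (hab : a ^ 2 < Qi * Qj) (hac : b ^ 2 < Qi * Qk) (hbc : d ^ 2 < Qj * Qk)
    (h1 : b * Qj ≤ a * d) (h2 : a * Qk ≤ b * d) (h3 : d * Qi ≤ a * b) : False := by
  have hd : 0 < d := by nlinarith
  nlinarith [mul_pos (mul_pos ha hb) hd, mul_pos (mul_pos hQi hQj) hQk,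
    mul_le_mul (mul_le_mul h1 h2 (by positivity) (by positivity)) h3 (by positivity) (by positivity),
    mul_lt_mul'' (mul_lt_mul'' hab hac (by positivity) (by positivity)) hbc (by positivity)
      (by positivity)]

theorem stmt6 (n : ℕ) (hn : 2 ≤ n) (hev : Even n)
    (v : Fin (n + 1) → EuclideanSpace ℝ (Fin n)) (hv : AffineIndependent ℝ v)
    (hfac : FacetsNonobtuse v) :
    ∃ ℓ, IsWDD (vGram v ℓ)⁻¹ := by
  classical
  have htop : affineSpan ℝ (Set.range v) = ⊤ := by
    rw [hv.affineSpan_eq_top_iff_card_eq_finrank_add_one]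
    simp [finrank_euclideanSpace_fin]
  set B : AffineBasis (Fin (n + 1)) ℝ (EuclideanSpace ℝ (Fin n)) := ⟨v, hv, htop⟩ with hBdef
  have hB : ∀ i, B i = v i := fun _ => rfl
  set q : Fin (n + 1) → EuclideanSpace ℝ (Fin n) := fun i =>
    (InnerProductSpace.toDual ℝ _).symm (LinearMap.toContinuousLinearMap (B.coord i).linear)
    with hqdef
  have hq : ∀ i u, ⟪q i, u⟫ = (B.coord i).linear u := fun i u => by
    simp [hqdef, InnerProductSpace.toDual_symm_apply]
  have hq' : ∀ i (x y : EuclideanSpace ℝ (Fin n)),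
      ⟪q i, x - y⟫ = B.coord i x - B.coord i y := fun i x y => by
    rw [hq, ← vsub_eq_sub, AffineMap.linearMap_vsub, vsub_eq_sub]
  have hcv : ∀ i j, B.coord i (v j) = if i = j then 1 else 0 := fun i j => by
    rw [← hB j, B.coord_apply]
  have hqvv : ∀ i a b, ⟪q i, v a - v b⟫ = (if i = a then (1:ℝ) else 0) - (if i = b then 1 else 0) :=
    fun i a b => by rw [hq' i (v a) (v b), hcv, hcv]
  -- third index exists
  have hthird : ∀ i j : Fin (n + 1), ∃ m, m ≠ i ∧ m ≠ j := by
    intro i j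
    by_contra h
    push_neg at h
    have hsub : (Finset.univ : Finset (Fin (n + 1))) ⊆ {i, j} := fun m _ => by
      rcases eq_or_ne m i with rfl | h'
      · simp
      · simp [h m h']
    have hcard := Finset.card_le_card hsub
    have h2 : ({i, j} : Finset (Fin (n + 1))).card ≤ 2 :=
      le_trans (Finset.card_insert_le _ _) (by simp)
    simp [Finset.card_univ] at hcard
    omega
  -- perpendicular to all edges from a vertex implies zero
  have hperp : ∀ (m : Fin (n + 1)) (w : EuclideanSpace ℝ (Fin n)),
      (∀ a : Fin (n + 1), ⟪w, v a - v m⟫ = 0) → w = 0 := by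
    intro m w hw
    have hb : ∀ j : {k : Fin (n + 1) // k ≠ m}, ⟪w, B.basisOf m j⟫ = 0 := fun j => by
      rw [B.basisOf_apply, hB, hB, vsub_eq_sub]; exact hw j
    have : ⟪w, w⟫ = 0 := by
      nth_rewrite 2 [← (B.basisOf m).sum_repr w]
      rw [inner_sum]
      simp only [real_inner_smul_right, hb, mul_zero, Finset.sum_const_zero]
    rwa [inner_self_eq_zero] at this
  -- q i nonzero
  have hq0 : ∀ i, q i ≠ 0 := by
    intro i hqi
    obtain ⟨m, hmi, -⟩ := hthird i i
    have h1 := hqvv i i m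
    rw [hqi] at h1
    simp [Ne.symm hmi] at h1
  -- strict Cauchy-Schwarz
  have hCS : ∀ i j, i ≠ j → ⟪q i, q j⟫ ^ 2 < ‖q i‖ ^ 2 * ‖q j‖ ^ 2 := by
    intro i j hij
    obtain ⟨m, hmi, hmj⟩ := hthird i j
    set z := ‖q j‖ ^ 2 • q i - ⟪q i, q j⟫ • q j with hz
    have hz0 : z ≠ 0 := by
      intro h0
      have : ⟪z, v i - v m⟫ = ‖q j‖ ^ 2 := by
        rw [hz, inner_sub_left, real_inner_smul_left, real_inner_smul_left, hqvv, hqvv]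
        simp [Ne.symm hmi, Ne.symm hmj, hij.symm]
      rw [h0] at this
      simp only [inner_zero_left] at this
      have hn0 : ‖q j‖ = 0 := by nlinarith [norm_nonneg (q j)]
      exact hq0 j (norm_eq_zero.mp hn0)
    have hzz : (0:ℝ) < ⟪z, z⟫ := by
      rw [real_inner_self_eq_norm_sq]
      exact pow_pos (norm_pos_iff.mpr hz0) 2
    have hexp : ⟪z, z⟫ = ‖q j‖ ^ 2 * (‖q i‖ ^ 2 * ‖q j‖ ^ 2 - ⟪q i, q j⟫ ^ 2) := by
      rw [hz]
      simp only [inner_sub_left, inner_sub_right, real_inner_smul_left, real_inner_smul_right]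
      rw [real_inner_self_eq_norm_sq, real_inner_self_eq_norm_sq, real_inner_comm (q j) (q i)]
      ring
    have hQj : (0:ℝ) < ‖q j‖ ^ 2 := pow_pos (norm_pos_iff.mpr (hq0 j)) 2
    nlinarith [hzz, hexp]
  -- the star inequality from the nonobtuse-facets hypothesis
  have hstar : ∀ i j m : Fin (n + 1), i ≠ j → m ≠ i → m ≠ j →
      ⟪q m, q i⟫ * ‖q j‖ ^ 2 ≤ ⟪q i, q j⟫ * ⟪q m, q j⟫ := by
    intro i j m hij hmi hmj
    obtain ⟨p, hp, horth⟩ := hfac i j hij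
    have hpcoord : ∀ m' : Fin (n + 1),
        (m' ≠ i → m' ≠ j → 0 ≤ B.coord m' p) ∧ ((m' = i ∨ m' = j) → B.coord m' p = 0) := by
      intro m'
      constructor
      · intro h1 h2
        refine convexHull_min ?_ ((convex_Ici (0:ℝ)).affine_preimage (B.coord m')) hp
        rintro - ⟨a, ha, rfl⟩
        simp only [Set.mem_preimage, Set.mem_Ici, hcv]
        split <;> norm_num
      · intro h12
        refine convexHull_min ?_ ((convex_singleton (0:ℝ)).affine_preimage (B.coord m')) hp
        rintro - ⟨a, ha, rfl⟩
        have hne : m' ≠ a := by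
          rcases h12 with rfl | rfl
          · exact fun h => ha.1 h.symm
          · exact fun h => ha.2 h.symm
        simp only [Set.mem_preimage, Set.mem_singleton_iff, hcv, if_neg hne]
    set u : EuclideanSpace ℝ (Fin n) := v i - p with hu_def
    have hu : ∀ m', ⟪q m', u⟫ = B.coord m' (v i) - B.coord m' p := fun m' => hq' m' (v i) p
    have hui : ⟪q i, u⟫ = 1 := by
      rw [hu, hcv, (hpcoord i).2 (Or.inl rfl)]; simp
    have huj : ⟪q j, u⟫ = 0 := by
      rw [hu, hcv, (hpcoord j).2 (Or.inr rfl)]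
      simp [Ne.symm hij]
    have hum : ⟪q m, u⟫ ≤ 0 := by
      rw [hu, hcv, if_neg hmi]
      linarith [(hpcoord m).1 hmi hmj]
    set α : ℝ := ⟪u, v i - v m⟫ with hα_def
    set β : ℝ := ⟪u, v j - v m⟫ with hβ_def
    have hdec : u = α • q i + β • q j := by
      have hr : ∀ a, ⟪u - (α • q i + β • q j), v a - v m⟫ = 0 := by
        intro a
        rw [inner_sub_left, inner_add_left, real_inner_smul_left, real_inner_smul_left,
          hqvv, hqvv]
        rcases eq_or_ne a i with rfl | hai
        · rw [← hα_def, if_pos rfl, if_neg (Ne.symm hmi), if_neg (Ne.symm hij),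
            if_neg (Ne.symm hmj)]
          ring
        rcases eq_or_ne a j with rfl | haj
        · rw [← hβ_def, if_neg hij, if_neg (Ne.symm hmi), if_pos rfl, if_neg (Ne.symm hmj)]
          ring
        · have h0 : ⟪u, v a - v m⟫ = 0 := horth a ⟨hai, haj⟩ m ⟨hmi, hmj⟩
          rw [h0, if_neg (Ne.symm hai), if_neg (Ne.symm hmi), if_neg (Ne.symm haj),
            if_neg (Ne.symm hmj)]
          ring
      have h0 := hperp m _ hr
      rw [sub_eq_zero] at h0
      exact h0
    have hqiu : ⟪q i, u⟫ = α * ‖q i‖ ^ 2 + β * ⟪q i, q j⟫ := by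
      rw [hdec, inner_add_right, real_inner_smul_right, real_inner_smul_right,
        real_inner_self_eq_norm_sq]
    have hqju : ⟪q j, u⟫ = α * ⟪q j, q i⟫ + β * ‖q j‖ ^ 2 := by
      rw [hdec, inner_add_right, real_inner_smul_right, real_inner_smul_right,
        real_inner_self_eq_norm_sq]
    have hqmu : ⟪q m, u⟫ = α * ⟪q m, q i⟫ + β * ⟪q m, q j⟫ := by
      rw [hdec, inner_add_right, real_inner_smul_right, real_inner_smul_right]
    have hsym : ⟪q j, q i⟫ = ⟪q i, q j⟫ := real_inner_comm _ _
    refine stmt6_star_alg (‖q i‖ ^ 2) (‖q j‖ ^ 2) ⟪q i, q j⟫ ⟪q m, q i⟫ ⟪q m, q j⟫ α β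
      (pow_pos (norm_pos_iff.mpr (hq0 j)) 2) (hCS i j hij) ?_ ?_ ?_
    · rw [← hqiu, hui]
    · rw [← hsym, ← hqju, huj]
    · rw [← hqmu]; exact hum
  -- no vertex has two positive q-inner-products
  have htriple : ∀ i j k : Fin (n + 1), i ≠ j → i ≠ k → j ≠ k →
      0 < ⟪q i, q j⟫ → 0 < ⟪q i, q k⟫ → False := by
    intro i j k hij hik hjk ha hb
    have h1 := hstar i j k hij (Ne.symm hik) (Ne.symm hjk)
    have h2 := hstar i k j hik (Ne.symm hij) hjk
    have h3 := hstar j i k (Ne.symm hij) (Ne.symm hjk) (Ne.symm hik)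
    have e1 : ⟪q k, q i⟫ = ⟪q i, q k⟫ := real_inner_comm _ _
    have e2 : ⟪q j, q i⟫ = ⟪q i, q j⟫ := real_inner_comm _ _
    have e3 : ⟪q k, q j⟫ = ⟪q j, q k⟫ := real_inner_comm _ _
    simp only [e1, e2, e3] at h1 h2 h3
    exact stmt6_triple_alg (‖q i‖ ^ 2) (‖q j‖ ^ 2) (‖q k‖ ^ 2)
      ⟪q i, q j⟫ ⟪q i, q k⟫ ⟪q j, q k⟫
      (pow_pos (norm_pos_iff.mpr (hq0 i)) 2) (pow_pos (norm_pos_iff.mpr (hq0 j)) 2)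
      (pow_pos (norm_pos_iff.mpr (hq0 k)) 2) ha hb
      (hCS i j hij) (hCS i k hik) (hCS j k hjk) h1 h2 h3
  -- parity argument: some vertex has all q-inner-products nonpositive
  have key : ∃ ℓ, ∀ j, j ≠ ℓ → ⟪q ℓ, q j⟫ ≤ 0 := by
    by_contra hcon
    push_neg at hcon
    choose σ hσ1 hσ2 using hcon
    have hinv : Function.Involutive σ := by
      intro ℓ
      have h2 : 0 < ⟪q (σ ℓ), q ℓ⟫ := by rw [real_inner_comm]; exact hσ2 ℓ
      by_contra hne
      exact htriple (σ ℓ) (σ (σ ℓ)) ℓ (Ne.symm (hσ1 (σ ℓ))) (hσ1 ℓ) hne (hσ2 (σ ℓ)) h2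
    exact stmt6_parity (Even.add_one hev) σ hinv hσ1
  obtain ⟨ℓ, hℓ⟩ := key
  refine ⟨ℓ, ?_⟩
  -- the inverse Gramian is the q-Gram matrix
  set C : Matrix {k : Fin (n + 1) // k ≠ ℓ} {k : Fin (n + 1) // k ≠ ℓ} ℝ :=
    Matrix.of fun i j => ⟪q i.1, q j.1⟫ with hCdef
  have hqb : ∀ (j a : {k : Fin (n + 1) // k ≠ ℓ}),
      ⟪q j.1, B.basisOf ℓ a⟫ = if a = j then 1 else 0 := by
    intro j a
    rw [B.basisOf_apply, hB, hB, vsub_eq_sub, hqvv, if_neg j.2]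
    by_cases h : a = j
    · subst h; simp
    · rw [if_neg (show ¬(j.1 = a.1) from fun hh => h (Subtype.ext hh.symm)), if_neg h]
      norm_num
  have hrepr : ∀ (u : EuclideanSpace ℝ (Fin n)) (j : {k : Fin (n + 1) // k ≠ ℓ}),
      (B.basisOf ℓ).repr u j = ⟪q j.1, u⟫ := by
    intro u j
    conv_rhs => rw [← (B.basisOf ℓ).sum_repr u]
    rw [inner_sum]
    simp_rw [real_inner_smul_right, hqb]
    simp
  have hexpand : ∀ u : EuclideanSpace ℝ (Fin n),
      ∑ a : {k : Fin (n + 1) // k ≠ ℓ}, ⟪q a.1, u⟫ • (v a.1 - v ℓ) = u := by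
    intro u
    conv_rhs => rw [← (B.basisOf ℓ).sum_repr u]
    refine Finset.sum_congr rfl fun a _ => ?_
    rw [hrepr, B.basisOf_apply, hB, hB, vsub_eq_sub]
  have hmul : vGram v ℓ * C = 1 := by
    ext i k
    rw [Matrix.mul_apply]
    have hterm : ∀ j : {k' : Fin (n + 1) // k' ≠ ℓ}, vGram v ℓ i j * C j k =
        ⟪v i.1 - v ℓ, ⟪q j.1, q k.1⟫ • (v j.1 - v ℓ)⟫ := by
      intro j
      rw [real_inner_smul_right]
      simp only [vGram, hCdef, Matrix.of_apply]
      ring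
    rw [Finset.sum_congr rfl fun j _ => hterm j, ← inner_sum, hexpand (q k.1),
      real_inner_comm, hqvv, if_neg k.2]
    by_cases h : i = k
    · subst h; simp [Matrix.one_apply]
    · rw [Matrix.one_apply_ne h, if_neg]
      · ring
      · exact fun hh => h (Subtype.ext hh.symm)
  have hinvG : (vGram v ℓ)⁻¹ = C := Matrix.inv_eq_right_inv hmul
  intro i
  rw [hinvG]
  have hsumq : ∑ j : Fin (n + 1), q j = 0 := by
    have h0 : ∀ u, ⟪∑ j : Fin (n + 1), q j, u⟫ = 0 := fun u => by
      rw [sum_inner]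
      have hterm : ∀ i', ⟪q i', u⟫ = B.coord i' u - B.coord i' 0 := fun i' => by
        have h := hq' i' u 0; rwa [sub_zero] at h
      simp_rw [hterm, Finset.sum_sub_distrib, B.sum_coord_apply_eq_one]
      ring
    have := h0 (∑ j : Fin (n + 1), q j)
    rwa [inner_self_eq_zero] at this
  have hsub : (∑ j : {k : Fin (n + 1) // k ≠ ℓ}, q j.1) = - q ℓ := by
    have h1 : ∑ j : {k : Fin (n + 1) // k ≠ ℓ}, q j.1 =
        ∑ j ∈ Finset.univ.erase ℓ, q j := by
      rw [← Finset.filter_ne' Finset.univ ℓ]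
      exact (Finset.sum_subtype _ (fun x => by simp) q).symm
    have h2 : ∑ j ∈ Finset.univ.erase ℓ, q j + q ℓ = 0 := by
      rw [Finset.sum_erase_add Finset.univ q (Finset.mem_univ ℓ)]; exact hsumq
    rw [h1]
    exact eq_neg_of_add_eq_zero_left h2
  have hrow : ∑ j : {k : Fin (n + 1) // k ≠ ℓ}, C i j = ⟪q i.1, - q ℓ⟫ := by
    rw [← hsub, inner_sum]
    rfl
  rw [hrow, inner_neg_right, real_inner_comm]
  have := hℓ i.1 i.2
  linarith
end
end

section
/- Let n ≥ 3 and let A be a symmetric positive definite entrywise nonnegative n×n real matrix that has a blocking column. Then A has a 3×3 principal submatrix that has a blocking column. -/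
open Matrix Finset
open scoped RealInnerProductSpace

noncomputable section

lemma pairBlock {n : ℕ} (A : Matrix (Fin n) (Fin n) ℝ) (j i1 i2 : Fin n)
    (h1j : i1 ≠ j) (h2j : i2 ≠ j) (h12 : i1 ≠ i2)
    (h1 : A i1 i1 < A i1 j ∨ A i1 i2 < A i1 j)
    (h2 : A i2 i2 < A i2 j ∨ A i2 i1 < A i2 j) :
    ∃ s : Finset (Fin n), s.card = 3 ∧ ∃ jj, IsBlockingCol (subMat A s) jj := by
  refine ⟨{j, i1, i2}, ?_, ⟨j, by simp⟩, ?_⟩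
  · rw [card_insert_of_notMem (by simp [Ne.symm h1j, Ne.symm h2j]),
      card_insert_of_notMem (by simp [h12]), card_singleton]
  · rintro ⟨i, hi⟩ hne
    have hij : i ≠ j := fun h => hne (Subtype.ext h)
    simp only [mem_insert, mem_singleton] at hi
    rcases hi with h | h | h
    · exact absurd h hij
    · rcases h1 with h1 | h1
      · exact ⟨⟨i1, by simp⟩, show A i i1 < A i j by rw [h]; exact h1⟩
      · exact ⟨⟨i2, by simp⟩, show A i i2 < A i j by rw [h]; exact h1⟩
    · rcases h2 with h2 | h2
      · exact ⟨⟨i2, by simp⟩, show A i i2 < A i j by rw [h]; exact h2⟩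
      · exact ⟨⟨i1, by simp⟩, show A i i1 < A i j by rw [h]; exact h2⟩

theorem stmt7 (n : ℕ) (hn : 3 ≤ n) (A : Matrix (Fin n) (Fin n) ℝ) (hpd : A.PosDef)
    (hnn : ∀ i j, 0 ≤ A i j) (hb : ∃ j, IsBlockingCol A j) :
    ∃ s : Finset (Fin n), s.card = 3 ∧ ∃ j, IsBlockingCol (subMat A s) j := by
  obtain ⟨j, hb⟩ := hb
  have hpos : 0 < n := by omega
  have hne : (Finset.univ : Finset (Fin n)).Nonempty := ⟨⟨0, hpos⟩, mem_univ _⟩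
  have hsym : ∀ a b, A a b = A b a := fun a b => by
    have := hpd.1
    rw [Matrix.IsHermitian] at this
    calc A a b = Aᴴ a b := by rw [this]
    _ = A b a := by simp [Matrix.conjTranspose_apply]
  set μ : Fin n → ℝ := fun i => Finset.univ.inf' hne (A i) with hμ
  have hμle : ∀ i k, μ i ≤ A i k := fun i k => inf'_le _ (mem_univ k)
  have hμlt : ∀ i, i ≠ j → μ i < A i j := by
    intro i hi
    obtain ⟨k, hk⟩ := hb i hi
    exact lt_of_le_of_lt (hμle i k) hk
  have hargmin : ∀ i, ∃ k, μ i = A i k := fun i => by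
    obtain ⟨k, _, hk⟩ := Finset.exists_mem_eq_inf' hne (A i)
    exact ⟨k, hk⟩
  -- S = all indices other than j
  set S : Finset (Fin n) := Finset.univ.erase j with hS
  have hScard : S.card = n - 1 := by
    rw [hS, card_erase_of_mem (mem_univ j), card_univ, Fintype.card_fin]
  have hSne : S.Nonempty := by
    rw [← Finset.card_pos, hScard]; omega
  obtain ⟨i1, hi1S, hi1min⟩ := Finset.exists_min_image S μ hSne
  have hi1j : i1 ≠ j := (Finset.mem_erase.mp hi1S).1
  obtain ⟨k1, hk1⟩ := hargmin i1
  have hk1lt : A i1 k1 < A i1 j := hk1 ▸ hμlt i1 hi1j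
  have hk1j : k1 ≠ j := fun h => absurd hk1lt (by rw [h]; exact lt_irrefl _)
  by_cases hk1i : k1 = i1
  · -- diagonal is a row minimum for i1; second round on S \ {i1}
    have hdiag1 : A i1 i1 < A i1 j := hk1i ▸ hk1lt
    set S' : Finset (Fin n) := S.erase i1 with hS'
    have hS'ne : S'.Nonempty := by
      rw [← Finset.card_pos, hS', card_erase_of_mem hi1S, hScard]; omega
    obtain ⟨i3, hi3S', hi3min⟩ := Finset.exists_min_image S' μ hS'ne
    have hi3i1 : i3 ≠ i1 := (Finset.mem_erase.mp hi3S').1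
    have hi3S : i3 ∈ S := (Finset.mem_erase.mp hi3S').2
    have hi3j : i3 ≠ j := (Finset.mem_erase.mp hi3S).1
    obtain ⟨k3, hk3⟩ := hargmin i3
    have hk3lt : A i3 k3 < A i3 j := hk3 ▸ hμlt i3 hi3j
    have hk3j : k3 ≠ j := fun h => absurd hk3lt (by rw [h]; exact lt_irrefl _)
    by_cases hk3i1 : k3 = i1
    · exact pairBlock A j i1 i3 hi1j hi3j (Ne.symm hi3i1)
        (Or.inl hdiag1) (Or.inr (hk3i1 ▸ hk3lt))
    · by_cases hk3i3 : k3 = i3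
      · exact pairBlock A j i1 i3 hi1j hi3j (Ne.symm hi3i1)
          (Or.inl hdiag1) (Or.inl (hk3i3 ▸ hk3lt))
      · -- k3 ∈ S', so μ i3 ≤ μ k3 < A k3 j
        have hk3S' : k3 ∈ S' := by
          rw [hS', Finset.mem_erase, hS, Finset.mem_erase]
          exact ⟨hk3i1, hk3j, mem_univ _⟩
        have h2 : A k3 i3 < A k3 j := by
          calc A k3 i3 = A i3 k3 := hsym k3 i3
          _ = μ i3 := hk3.symm
          _ ≤ μ k3 := hi3min k3 hk3S'
          _ < A k3 j := hμlt k3 hk3j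
        exact pairBlock A j i3 k3 hi3j hk3j (Ne.symm hk3i3)
          (Or.inr hk3lt) (Or.inr h2)
  · -- k1 ≠ i1 : pair (i1, k1)
    have hk1S : k1 ∈ S := by
      rw [hS, Finset.mem_erase]; exact ⟨hk1j, mem_univ _⟩
    have h2 : A k1 i1 < A k1 j := by
      calc A k1 i1 = A i1 k1 := hsym k1 i1
      _ = μ i1 := hk1.symm
      _ ≤ μ k1 := hi1min k1 hk1S
      _ < A k1 j := hμlt k1 hk1j
    exact pairBlock A j i1 k1 hi1j hk1j (Ne.symm hk1i)
      (Or.inr hk1lt) (Or.inr h2)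
end
end

section
/- Let n ≥ 3 and let v_0,…,v_n be affinely independent points in ℝ^n forming an n-simplex S all of whose facets are nonobtuse. Suppose S has an obtuse dihedral angle, i.e., ⟨q_i, q_j⟩ > 0 for some pair of inward normals q_i, q_j with i ≠ j. Then some vertex Gramian of S has a blocking column. -/
open Matrix Finset
open scoped RealInnerProductSpace

noncomputable section

section AuxHelpers8
variable {E : Type*} [NormedAddCommGroup E] [InnerProductSpace ℝ E]

private lemma auxLin8 (u : E) : IsLinearMap ℝ (fun x : E => (⟪u, x⟫ : ℝ)) :=
  ⟨fun a b => inner_add_right u a b, fun c x => real_inner_smul_right u x c⟩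

private lemma hull_inner_eq8 {s : Set E} {u : E} {r : ℝ}
    (h : ∀ y ∈ s, ⟪u, y⟫ = r) {p : E} (hp : p ∈ convexHull ℝ s) : ⟪u, p⟫ = r :=
  convexHull_min h (convex_hyperplane (auxLin8 u) r) hp

private lemma hull_inner_lt8 {s : Set E} {u : E} {r : ℝ}
    (h : ∀ y ∈ s, ⟪u, y⟫ < r) {p : E} (hp : p ∈ convexHull ℝ s) : ⟪u, p⟫ < r :=
  convexHull_min h (convex_halfSpace_lt (auxLin8 u) r) hp

private lemma hull_inner_ge8 {s : Set E} {u : E} {r : ℝ}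
    (h : ∀ y ∈ s, r ≤ ⟪u, y⟫) {p : E} (hp : p ∈ convexHull ℝ s) : r ≤ ⟪u, p⟫ :=
  convexHull_min h (convex_halfSpace_ge (auxLin8 u) r) hp

private lemma mem_orth_of_inner8 {W : Submodule ℝ E} {D : Set E}
    (hWD : W = Submodule.span ℝ D) {z : E} (h : ∀ d ∈ D, ⟪z, d⟫ = 0) : z ∈ Wᗮ := by
  have h1 : W ≤ (ℝ ∙ z)ᗮ := by
    rw [hWD, Submodule.span_le]
    intro d hd
    exact Submodule.mem_orthogonal_singleton_iff_inner_right.mpr (h d hd)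
  have h2 : (ℝ ∙ z)ᗮᗮ ≤ Wᗮ := Submodule.orthogonal_le h1
  exact h2 (Submodule.le_orthogonal_orthogonal _ (Submodule.mem_span_singleton_self z))
end AuxHelpers8

set_option maxHeartbeats 1000000 in
theorem stmt8 (n : ℕ) (hn : 3 ≤ n) (v : Fin (n + 1) → EuclideanSpace ℝ (Fin n))
    (hv : AffineIndependent ℝ v) (hfac : FacetsNonobtuse v)
    (i j : Fin (n + 1)) (hij : i ≠ j) (qi qj : EuclideanSpace ℝ (Fin n))
    (hqi : IsInwardNormal v i qi) (hqj : IsInwardNormal v j qj)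
    (hobt : 0 < ⟪qi, qj⟫) :
    ∃ ℓ j0, IsBlockingCol (vGram v ℓ) j0 := by
  classical
  obtain ⟨m, rfl⟩ : ∃ m, n = m + 3 := ⟨n - 3, by omega⟩
  obtain ⟨-, hqiO, hqiP⟩ := hqi
  obtain ⟨-, hqjO, hqjP⟩ := hqj
  obtain ⟨p, hp, hpO⟩ := hfac i j hij
  obtain ⟨p', hp', hpO'⟩ := hfac j i hij.symm
  obtain ⟨A, hAdef⟩ : ∃ A : EuclideanSpace ℝ (Fin (m + 3)), A = v i - p := ⟨_, rfl⟩
  obtain ⟨B, hBdef⟩ : ∃ B : EuclideanSpace ℝ (Fin (m + 3)), B = v j - p' := ⟨_, rfl⟩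
  -- Basic inner product facts with the inward normals
  have hqiA : 0 < ⟪qi, A⟫ := by
    have hlt : ⟪qi, p⟫ < ⟪qi, v i⟫ := by
      refine hull_inner_lt8 ?_ hp
      rintro y ⟨k, hk, rfl⟩
      have h := hqiP k hk.1
      rw [inner_sub_right] at h; linarith
    rw [hAdef, inner_sub_right]; linarith
  have hqiB : ⟪qi, B⟫ = 0 := by
    have heq : ⟪qi, p'⟫ = ⟪qi, v j⟫ := by
      refine hull_inner_eq8 ?_ hp'
      rintro y ⟨k, hk, rfl⟩
      have h := hqiO j k hij.symm hk.2
      rw [inner_sub_right] at h; linarith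
    rw [hBdef, inner_sub_right]; linarith
  have hqjB : 0 < ⟪qj, B⟫ := by
    have hlt : ⟪qj, p'⟫ < ⟪qj, v j⟫ := by
      refine hull_inner_lt8 ?_ hp'
      rintro y ⟨k, hk, rfl⟩
      have h := hqjP k hk.1
      rw [inner_sub_right] at h; linarith
    rw [hBdef, inner_sub_right]; linarith
  have hqjA : ⟪qj, A⟫ = 0 := by
    have heq : ⟪qj, p⟫ = ⟪qj, v i⟫ := by
      refine hull_inner_eq8 ?_ hp
      rintro y ⟨k, hk, rfl⟩
      have h := hqjO i k hij hk.2
      rw [inner_sub_right] at h; linarith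
    rw [hAdef, inner_sub_right]; linarith
  -- Linear independence of A and B
  have hli : ∀ s t : ℝ, s • A + t • B = 0 → s = 0 ∧ t = 0 := by
    intro s t hst
    have h1 : (⟪qi, s • A + t • B⟫ : ℝ) = 0 := by rw [hst, inner_zero_right]
    rw [inner_add_right, real_inner_smul_right, real_inner_smul_right, hqiB] at h1
    have hs : s = 0 := by
      rcases mul_eq_zero.mp (by linarith : s * ⟪qi, A⟫ = 0) with h | h
      · exact h
      · exact absurd h (ne_of_gt hqiA)
    subst hs
    have h2 : (⟪qj, (0:ℝ) • A + t • B⟫ : ℝ) = 0 := by rw [hst, inner_zero_right]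
    rw [inner_add_right, real_inner_smul_right, real_inner_smul_right, hqjA] at h2
    refine ⟨rfl, ?_⟩
    rcases mul_eq_zero.mp (by linarith : t * ⟪qj, B⟫ = 0) with h | h
    · exact h
    · exact absurd h (ne_of_gt hqjB)
  -- The ridge span W and its orthogonal complement
  obtain ⟨W, hWdef⟩ : ∃ W : Submodule ℝ (EuclideanSpace ℝ (Fin (m + 3))),
      W = vectorSpan ℝ (v '' {k | k ≠ i ∧ k ≠ j}) := ⟨_, rfl⟩
  have hWspan : W = Submodule.span ℝ
      ((v '' {k | k ≠ i ∧ k ≠ j}) -ᵥ (v '' {k | k ≠ i ∧ k ≠ j})) := by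
    rw [hWdef, vectorSpan_def]
  have memPerp : ∀ z : EuclideanSpace ℝ (Fin (m + 3)),
      (∀ x : Fin (m + 3 + 1), x ≠ i ∧ x ≠ j → ∀ y : Fin (m + 3 + 1), y ≠ i ∧ y ≠ j →
        ⟪z, v x - v y⟫ = 0) → z ∈ Wᗮ := by
    intro z hz
    refine mem_orth_of_inner8 hWspan ?_
    intro d hd
    rw [Set.mem_vsub] at hd
    obtain ⟨x, ⟨kx, hkx, rfl⟩, y, ⟨ky, hky, rfl⟩, rfl⟩ := hd
    rw [vsub_eq_sub]
    exact hz kx hkx ky hky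
  have hAW : A ∈ Wᗮ := memPerp A fun x hx y hy => by rw [hAdef]; exact hpO x hx y hy
  have hBW : B ∈ Wᗮ := memPerp B fun x hx y hy => by
    rw [hBdef]; exact hpO' x ⟨hx.2, hx.1⟩ y ⟨hy.2, hy.1⟩
  have hqiW : qi ∈ Wᗮ := memPerp qi fun x hx y hy => hqiO x y hx.1 hy.1
  have hqjW : qj ∈ Wᗮ := memPerp qj fun x hx y hy => hqjO x y hx.2 hy.2
  -- dimension count
  have hvs : AffineIndependent ℝ (fun k : {k : Fin (m + 3 + 1) // k ≠ i ∧ k ≠ j} => v k.1) :=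
    hv.comp_embedding (Function.Embedding.subtype _)
  have hrange : Set.range (fun k : {k : Fin (m + 3 + 1) // k ≠ i ∧ k ≠ j} => v k.1)
      = v '' {k | k ≠ i ∧ k ≠ j} := by
    ext x
    constructor
    · rintro ⟨k, rfl⟩; exact ⟨k.1, k.2, rfl⟩
    · rintro ⟨k, hk, rfl⟩; exact ⟨⟨k, hk⟩, rfl⟩
  have hcard : Fintype.card {k : Fin (m + 3 + 1) // k ≠ i ∧ k ≠ j} = m + 2 := by
    rw [Fintype.card_subtype]
    have h2 : Finset.filter (fun k => k ≠ i ∧ k ≠ j) Finset.univ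
        = ({i, j} : Finset (Fin (m + 3 + 1)))ᶜ := by
      ext k; simp [not_or]
    rw [h2, Finset.card_compl]
    have h3 : ({i, j} : Finset (Fin (m + 3 + 1))).card = 2 := by
      rw [Finset.card_insert_of_notMem (by simpa using hij), Finset.card_singleton]
    rw [h3, Fintype.card_fin]
    omega
  have hWrank : Module.finrank ℝ W = m + 1 := by
    rw [hWdef, ← hrange]
    exact hvs.finrank_vectorSpan hcard
  have hWperp : Module.finrank ℝ Wᗮ = 2 := by
    have h := Submodule.finrank_add_finrank_orthogonal W
    rw [hWrank, finrank_euclideanSpace_fin] at h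
    omega
  -- span {A, B} = Wᗮ
  have hliAB : LinearIndependent ℝ ![A, B] := LinearIndependent.pair_iff.mpr hli
  have hle : Submodule.span ℝ (Set.range ![A, B]) ≤ Wᗮ := by
    rw [Submodule.span_le]
    rintro x ⟨k, rfl⟩
    fin_cases k
    · simpa using hAW
    · simpa using hBW
  have hspanrank : Module.finrank ℝ (Submodule.span ℝ (Set.range ![A, B])) = 2 := by
    rw [finrank_span_eq_card hliAB]; simp
  have hEq : Submodule.span ℝ (Set.range ![A, B]) = Wᗮ :=
    Submodule.eq_of_le_of_finrank_eq hle (by rw [hspanrank, hWperp])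
  rw [← hEq] at hqiW hqjW
  obtain ⟨cqi, hcqi⟩ := (Submodule.mem_span_range_iff_exists_fun ℝ).mp hqiW
  obtain ⟨cqj, hcqj⟩ := (Submodule.mem_span_range_iff_exists_fun ℝ).mp hqjW
  rw [Fin.sum_univ_two] at hcqi hcqj
  simp only [Matrix.cons_val_zero, Matrix.cons_val_one, Matrix.head_cons] at hcqi hcqj
  obtain ⟨a, b, hab⟩ : ∃ a b : ℝ, a • A + b • B = qi := ⟨cqi 0, cqi 1, hcqi⟩
  obtain ⟨c, d, hcd⟩ : ∃ c d : ℝ, c • A + d • B = qj := ⟨cqj 0, cqj 1, hcqj⟩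
  have expand : ∀ (s t : ℝ) (x : EuclideanSpace ℝ (Fin (m + 3))),
      (⟪s • A + t • B, x⟫ : ℝ) = s * ⟪A, x⟫ + t * ⟪B, x⟫ := fun s t x => by
    rw [inner_add_left, real_inner_smul_left, real_inner_smul_left]
  have hBA : (⟪B, A⟫ : ℝ) = ⟪A, B⟫ := real_inner_comm A B
  have e1 : 0 < a * ⟪A, A⟫ + b * ⟪A, B⟫ := by
    rw [← hBA, ← expand, hab]; exact hqiA
  have e2 : a * ⟪A, B⟫ + b * ⟪B, B⟫ = 0 := by
    rw [← expand, hab]; exact hqiB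
  have e3 : 0 < c * ⟪A, B⟫ + d * ⟪B, B⟫ := by
    rw [← expand, hcd]; exact hqjB
  have e4 : c * ⟪A, A⟫ + d * ⟪A, B⟫ = 0 := by
    rw [← hBA, ← expand, hcd]; exact hqjA
  have e5 : 0 < a * (c * ⟪A, A⟫ + d * ⟪A, B⟫) + b * (c * ⟪A, B⟫ + d * ⟪B, B⟫) := by
    have eAq : (⟪A, qj⟫ : ℝ) = c * ⟪A, A⟫ + d * ⟪A, B⟫ := by
      rw [← hcd, inner_add_right, real_inner_smul_right, real_inner_smul_right]
    have eBq : (⟪B, qj⟫ : ℝ) = c * ⟪A, B⟫ + d * ⟪B, B⟫ := by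
      rw [← hcd, inner_add_right, real_inner_smul_right, real_inner_smul_right, hBA]
    rw [← eAq, ← eBq, ← expand, hab]
    exact hobt
  -- positivity facts
  have hA0 : A ≠ 0 := by
    intro h; rw [h, inner_zero_right] at hqiA; exact lt_irrefl 0 hqiA
  have hB0 : B ≠ 0 := by
    intro h; rw [h, inner_zero_right] at hqjB; exact lt_irrefl 0 hqjB
  have hα : 0 < (⟪A, A⟫ : ℝ) :=
    lt_of_le_of_ne real_inner_self_nonneg fun h => hA0 (inner_self_eq_zero.mp h.symm)
  have hβ : 0 < (⟪B, B⟫ : ℝ) :=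
    lt_of_le_of_ne real_inner_self_nonneg fun h => hB0 (inner_self_eq_zero.mp h.symm)
  have hCS : (⟪A, B⟫ : ℝ) * ⟪A, B⟫ ≤ ⟪A, A⟫ * ⟪B, B⟫ := real_inner_mul_inner_self_le A B
  -- the key sign: ⟪A, B⟫ < 0
  have e2g : (⟪A, B⟫ : ℝ) * (a * ⟪A, B⟫ + b * ⟪B, B⟫) = 0 := by rw [e2, mul_zero]
  have h6 : 0 < a * (⟪A, A⟫ * ⟪B, B⟫ - ⟪A, B⟫ * ⟪A, B⟫) := by
    nlinarith [mul_pos hβ e1, e2g]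
  have hXnn : 0 ≤ (⟪A, A⟫ : ℝ) * ⟪B, B⟫ - ⟪A, B⟫ * ⟪A, B⟫ := by linarith
  have ha' : 0 < a := by
    by_contra hcon
    push_neg at hcon
    nlinarith [mul_nonneg (neg_nonneg.mpr hcon) hXnn]
  have hX : 0 < (⟪A, A⟫ : ℝ) * ⟪B, B⟫ - ⟪A, B⟫ * ⟪A, B⟫ :=
    hXnn.lt_of_ne fun h => by rw [← h, mul_zero] at h6; exact lt_irrefl 0 h6
  have e4g : (⟪A, B⟫ : ℝ) * (c * ⟪A, A⟫ + d * ⟪A, B⟫) = 0 := by rw [e4, mul_zero]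
  have h7 : 0 < d * (⟪A, A⟫ * ⟪B, B⟫ - ⟪A, B⟫ * ⟪A, B⟫) := by
    nlinarith [mul_pos hα e3, e4g]
  have hd' : 0 < d := by
    by_contra hcon
    push_neg at hcon
    nlinarith [mul_nonneg (neg_nonneg.mpr hcon) hXnn]
  have e2gc : c * (⟪A, B⟫ : ℝ) * (a * ⟪A, B⟫ + b * ⟪B, B⟫) = 0 := by rw [e2, mul_zero]
  have e2gd : d * (⟪B, B⟫ : ℝ) * (a * ⟪A, B⟫ + b * ⟪B, B⟫) = 0 := by rw [e2, mul_zero]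
  have h8 : 0 < a * c * (⟪A, A⟫ * ⟪B, B⟫ - ⟪A, B⟫ * ⟪A, B⟫) := by
    nlinarith [mul_pos hβ e5, e2gc, e2gd]
  have hc' : 0 < c := by
    by_contra hcon
    push_neg at hcon
    nlinarith [mul_nonneg (neg_nonneg.mpr hcon) (mul_pos ha' hX).le]
  have hg : (⟪A, B⟫ : ℝ) < 0 := by
    by_contra hcon
    push_neg at hcon
    nlinarith [mul_nonneg hd'.le hcon, mul_pos hc' hα, e4]
  -- conclusion: column j of the vertex Gramian at i is blocking
  refine ⟨i, ⟨j, hij.symm⟩, ?_⟩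
  rintro ⟨r, hr⟩ hrj
  have hrj' : r ≠ j := fun h => hrj (Subtype.ext h)
  -- 0 < ⟪v r - v i, B⟫
  have hrB : (⟪B, p⟫ : ℝ) = ⟪B, v r⟫ := by
    refine hull_inner_eq8 ?_ hp
    rintro y ⟨k, hk, rfl⟩
    have h := hpO' k ⟨hk.2, hk.1⟩ r ⟨hrj', hr⟩
    rw [← hBdef, inner_sub_right] at h; linarith
  have hkey : 0 < (⟪v r - v i, B⟫ : ℝ) := by
    rw [real_inner_comm]
    have h1 : (⟪B, v r - v i⟫ : ℝ) = ⟪B, p - v i⟫ := by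
      rw [inner_sub_right, inner_sub_right, hrB]
    have h2 : (⟪B, p - v i⟫ : ℝ) = -⟪A, B⟫ := by
      rw [show p - v i = -A from by rw [hAdef]; abel, inner_neg_right, hBA]
    rw [h1, h2]; linarith
  by_contra hno
  push_neg at hno
  simp only [vGram, Matrix.of_apply] at hno
  have hall : ∀ y ∈ v '' {k | k ≠ j ∧ k ≠ i},
      (⟪v r - v i, v j⟫ : ℝ) ≤ ⟪v r - v i, y⟫ := by
    rintro y ⟨k, hk, rfl⟩
    have h := hno ⟨k, hk.2⟩
    rw [inner_sub_right, inner_sub_right] at h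
    linarith
  have hge := hull_inner_ge8 hall hp'
  rw [hBdef, inner_sub_right] at hkey
  linarith
end
end

section
/- Let 2 ≤ k ≤ n and let v_0,…,v_n be affinely independent points in ℝ^n forming an n-simplex S with vertex Gramians G_0,…,G_n. Suppose every k×k principal submatrix of every vertex Gramian G_ℓ has an inverse that is a weakly diagonally dominant Stieltjes matrix (i.e., all k-dimensional faces of S are nonobtuse simplices), and suppose that for every m with k < m ≤ n, every m×m principal submatrix of every vertex Gramian G_ℓ is nonblocking. Then the inverse of every vertex Gramian of S is a weakly diagonally dominant Stieltjes matrix (i.e., S is a nonobtuse simplex). -/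
open Matrix Finset
open scoped RealInnerProductSpace

noncomputable section

/-!
A face `S` of the simplex carries its dual family `q a` (`a ∈ S`), the gradients of its
barycentric coordinates. For a vertex `c ∈ S`, the inverse of the vertex Gramian of the face at
`c` is the Gram matrix of `(q a)_{a ≠ c}`, and its row sums are `-⟪q a, q c⟫` because
`∑ q a = 0`. So the inverse is a weakly diagonally dominant Stieltjes matrix iff
`⟪q a, q b⟫ ≤ 0` for all `a ≠ b`, i.e. iff the face is nonobtuse.

Nonobtuseness then propagates from the `k`-faces upwards, one dimension at a time. Let
`T = S \ {y}` be a nonobtuse facet with dual family `q'` and let `x ≠ y`. Expanding `q y` in the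
edges from another vertex `i` of `T` and pairing with `q' x` gives
`⟪q y, q x⟫ = ‖q y‖² ⟪q' x, v i - v y⟫`. Expanding `q' x` in the edges from `v x` turns the last
factor into `∑ j, ⟪q' x, q' j⟫ ⟪v j - v x, v i - v y⟫`, and every term is nonpositive as soon as
`⟪v i - v y, v x - v y⟫` is minimal in its row of the Gramian at `y`; the nonblocking condition
provides such an `i`.
-/

open Function Submodule

section Biorthogonal

variable {κ V : Type*} [Fintype κ] [DecidableEq κ] [NormedAddCommGroup V] [InnerProductSpace ℝ V]
  {u w : κ → V}

theorem eq_sum_inner_smul_of_biorthogonal (huw : ∀ i j, ⟪w i, u j⟫ = if i = j then 1 else 0)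
    {x : V} (hx : x ∈ span ℝ (Set.range u)) : x = ∑ j, ⟪x, w j⟫ • u j := by
  obtain ⟨c, rfl⟩ := (mem_span_range_iff_exists_fun ℝ).1 hx
  refine sum_congr rfl fun j _ => congrArg (· • u j) ?_
  simp only [real_inner_comm (w j), inner_sum, real_inner_smul_right, huw, mul_ite, mul_one,
    mul_zero, sum_ite_eq, mem_univ, if_true]

theorem exists_biorthogonal_of_linearIndependent (hu : LinearIndependent ℝ u) :
    ∃ w : κ → V, (∀ i j, ⟪w i, u j⟫ = if i = j then 1 else 0) ∧
      ∀ i, w i ∈ span ℝ (Set.range u) := by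
  have hdet : IsUnit (gram ℝ u).det :=
    isUnit_iff_isUnit_det _ |>.1 (posDef_gram_of_linearIndependent hu).isUnit
  refine ⟨fun i => ∑ j, (gram ℝ u)⁻¹ i j • u j, fun i j => ?_,
    fun i => sum_mem fun j _ => smul_mem _ _ (subset_span ⟨j, rfl⟩)⟩
  simpa [sum_inner, real_inner_smul_left, mul_apply, one_apply, gram_apply] using
    congrFun (congrFun (nonsing_inv_mul _ hdet) i) j

theorem inv_gram_eq_gram_of_biorthogonal (huw : ∀ i j, ⟪w i, u j⟫ = if i = j then 1 else 0)
    (hw : ∀ i, w i ∈ span ℝ (Set.range u)) : (gram ℝ u)⁻¹ = gram ℝ w := by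
  refine inv_eq_left_inv (ext fun i b => ?_)
  calc (gram ℝ w * gram ℝ u) i b = ⟪∑ j, ⟪w i, w j⟫ • u j, u b⟫ := by
        simp [mul_apply, sum_inner, real_inner_smul_left, gram_apply]
    _ = ⟪w i, u b⟫ := by rw [← eq_sum_inner_smul_of_biorthogonal huw (hw i)]
    _ = (1 : Matrix κ κ ℝ) i b := by rw [huw, one_apply]

end Biorthogonal

section DualFamily

variable {ι κ V : Type*} [NormedAddCommGroup V] [InnerProductSpace ℝ V] {v : ι → V} {c : ι}
  {e : κ → ι}

theorem AffineIndependent.linearIndependent_sub_comp (hv : AffineIndependent ℝ v)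
    (he : Injective e) (hec : ∀ i, e i ≠ c) : LinearIndependent ℝ fun i => v (e i) - v c :=
  ((affineIndependent_iff_linearIndependent_vsub ℝ v c).1 hv).comp (fun i => ⟨e i, hec i⟩)
    fun _ _ h => he (congrArg Subtype.val h)

variable [DecidableEq ι] {S : Finset ι} {q : ι → V}

/-- `q a` is the inward normal of the facet of `S` opposite `v a`, scaled by the reciprocal of the
height of `v a` over that facet. -/
structure IsDualFamily (v : ι → V) (S : Finset ι) (q : ι → V) : Prop where
  inner_sub : ∀ a ∈ S, ∀ b ∈ S, ∀ d ∈ S,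
    ⟪q a, v b - v d⟫ = (if a = b then 1 else 0) - if a = d then 1 else 0
  sum_eq_zero : ∑ a ∈ S, q a = 0
  mem_vectorSpan : ∀ a ∈ S, q a ∈ vectorSpan ℝ (v '' S)

/-- All dihedral angles of the face are at most `π / 2`. -/
def IsNonobtuseFace (v : ι → V) (S : Finset ι) : Prop :=
  ∃ q, IsDualFamily v S q ∧ (S : Set ι).Pairwise fun a b => ⟪q a, q b⟫ ≤ 0

theorem exists_isDualFamily (hv : AffineIndependent ℝ v) (S : Finset ι) :
    ∃ q, IsDualFamily v S q := by
  rcases S.eq_empty_or_nonempty with rfl | ⟨c, hc⟩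
  · exact ⟨0, by simp, by simp, by simp⟩
  obtain ⟨w, hwu, hw⟩ := exists_biorthogonal_of_linearIndependent <|
    hv.linearIndependent_sub_comp (e := ((↑) : S.erase c → ι)) Subtype.val_injective
      fun j => (mem_erase.1 j.2).1
  let q : ι → V := fun a => if h : a ∈ S.erase c then w ⟨a, h⟩ else -∑ j, w j
  have hq_sub (a : ι) (ha : a ∈ S) (b : ι) (hb : b ∈ S) :
      ⟪q a, v b - v c⟫ = (if a = b then 1 else 0) - if a = c then 1 else 0 := by
    by_cases hbc : b = c
    · subst hbc; simp
    have hb' : b ∈ S.erase c := mem_erase.2 ⟨hbc, hb⟩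
    by_cases hac : a = c
    · subst hac
      simp [q, inner_neg_left, sum_inner, hwu _ ⟨b, hb'⟩, Ne.symm hbc]
    · have ha' : a ∈ S.erase c := mem_erase.2 ⟨hac, ha⟩
      have hwab := hwu ⟨a, ha'⟩ ⟨b, hb'⟩
      simp only [Subtype.mk.injEq] at hwab
      simp only [q, dif_pos ha', hwab, if_neg hac, sub_zero]
  have hspan : span ℝ (Set.range fun j : S.erase c => v j - v c) ≤ vectorSpan ℝ (v '' S) :=
    span_le.2 <| Set.range_subset_iff.2 fun j => vsub_mem_vectorSpan ℝ
      (Set.mem_image_of_mem v (mem_of_mem_erase j.2)) (Set.mem_image_of_mem v hc)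
  refine ⟨q, ⟨fun a ha b hb d hd => ?_, ?_, fun a ha => ?_⟩⟩
  · rw [← sub_sub_sub_cancel_right (v b) (v d) (v c), inner_sub_right, hq_sub a ha b hb,
      hq_sub a ha d hd]
    ring
  · rw [← add_sum_erase S q hc, sum_dite_of_true fun _ h => h]
    simp [q]
  · by_cases h : a ∈ S.erase c
    · simpa only [q, dif_pos h] using hspan (hw _)
    · simpa only [q, dif_neg h] using neg_mem (sum_mem fun j _ => hspan (hw j))

namespace IsDualFamily

theorem eq_sum_inner_smul (hq : IsDualFamily v S q) {x : V} (hx : x ∈ vectorSpan ℝ (v '' S))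
    (z : V) : x = ∑ j ∈ S, ⟪x, q j⟫ • (v j - z) := by
  rw [vectorSpan_def] at hx
  induction hx using span_induction with
  | mem x hx =>
    obtain ⟨_, ⟨b, hb, rfl⟩, _, ⟨d, hd, rfl⟩, rfl⟩ := Set.mem_vsub.1 hx
    rw [mem_coe] at hb hd
    rw [vsub_eq_sub]
    calc v b - v d
        = ∑ j ∈ S, ((if j = b then (1 : ℝ) else 0) - if j = d then 1 else 0) • (v j - z) := by
          simp [sub_smul, sum_sub_distrib, hb, hd]
      _ = _ := sum_congr rfl fun j hj => by rw [real_inner_comm, hq.inner_sub j hj b hb d hd]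
  | zero => simp
  | add x y _ _ hx hy => simp only [inner_add_left, add_smul, sum_add_distrib, ← hx, ← hy]
  | smul a x _ hx => simp only [real_inner_smul_left, mul_smul, ← smul_sum, ← hx]

variable [Fintype κ]

theorem inv_gram [DecidableEq κ] (hq : IsDualFamily v S q) (hS : S = insert c (univ.image e))
    (he : Injective e) (hec : ∀ i, e i ≠ c) :
    (gram ℝ fun i => v (e i) - v c)⁻¹ = gram ℝ (q ∘ e) := by
  subst hS
  have hc : c ∈ insert c (univ.image e) := mem_insert_self _ _
  have heS (i : κ) : e i ∈ insert c (univ.image e) :=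
    mem_insert_of_mem (mem_image_of_mem _ (mem_univ i))
  refine inv_gram_eq_gram_of_biorthogonal (fun i j => ?_) fun i => ?_
  · rw [Function.comp_apply, hq.inner_sub _ (heS i) _ (heS j) _ hc, if_neg (hec i), sub_zero]
    simp only [he.eq_iff]
  · have hspan : vectorSpan ℝ (v '' ↑(insert c (univ.image e))) ≤
        span ℝ (Set.range fun i => v (e i) - v c) := by
      rw [vectorSpan_eq_span_vsub_set_right ℝ (Set.mem_image_of_mem v hc), span_le]
      rintro _ ⟨_, ⟨a, ha, rfl⟩, rfl⟩
      simp only [coe_insert, coe_image, coe_univ, Set.image_univ, Set.mem_insert_iff,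
        Set.mem_range] at ha
      rcases ha with rfl | ⟨j, rfl⟩
      · simp
      · exact subset_span ⟨j, rfl⟩
    exact hspan (hq.mem_vectorSpan _ (heS i))

theorem sum_comp_eq_neg (hq : IsDualFamily v S q) (hS : S = insert c (univ.image e))
    (he : Injective e) (hec : ∀ i, e i ≠ c) : ∑ i, q (e i) = -q c := by
  subst hS
  have hc : c ∉ univ.image e := by simpa using hec
  rw [eq_neg_iff_add_eq_zero, add_comm, ← hq.sum_eq_zero, sum_insert hc, sum_image he.injOn]

theorem isStieltjes_inv_gram_and_isWDD_iff [DecidableEq κ] (hq : IsDualFamily v S q)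
    (hv : AffineIndependent ℝ v) (hS : S = insert c (univ.image e)) (he : Injective e)
    (hec : ∀ i, e i ≠ c) :
    IsStieltjes (gram ℝ fun i => v (e i) - v c)⁻¹ ∧ IsWDD (gram ℝ fun i => v (e i) - v c)⁻¹ ↔
      (S : Set ι).Pairwise fun a b => ⟪q a, q b⟫ ≤ 0 := by
  have hpd := (posDef_gram_of_linearIndependent (hv.linearIndependent_sub_comp he hec)).inv
  have hrow (i : κ) : ∑ j, ⟪q (e i), q (e j)⟫ = -⟪q (e i), q c⟫ := by
    rw [← inner_sum, hq.sum_comp_eq_neg hS he hec, inner_neg_right]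
  rw [hq.inv_gram hS he hec] at hpd ⊢
  subst hS
  simp only [IsStieltjes, IsWDD, gram_apply, Function.comp_apply, hrow, hpd, true_and, neg_nonneg]
  constructor
  · rintro ⟨hoff, hc⟩ a ha b hb hab
    simp only [coe_insert, coe_image, coe_univ, Set.image_univ, Set.mem_insert_iff,
      Set.mem_range] at ha hb
    rcases ha with rfl | ⟨i, rfl⟩ <;> rcases hb with rfl | ⟨j, rfl⟩
    · exact absurd rfl hab
    · rw [real_inner_comm]; exact hc j
    · exact hc i
    · exact hoff i j (ne_of_apply_ne e hab)
  · intro h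
    exact ⟨fun i j hij => h (by simp) (by simp) (he.ne hij), fun i => h (by simp) (by simp) (hec i)⟩

theorem inner_nonpos_of_facet (hq : IsDualFamily v S q) {y : ι} (hy : y ∈ S) {qT : ι → V}
    (hqT : IsDualFamily v (S.erase y) qT)
    (hT : (S.erase y : Set ι).Pairwise fun a b => ⟪qT a, qT b⟫ ≤ 0) {x i : ι}
    (hx : x ∈ S.erase y) (hi : i ∈ S.erase y) (hix : i ≠ x)
    (hmin : ∀ j ∈ S.erase y, ⟪v i - v y, v x - v y⟫ ≤ ⟪v i - v y, v j - v y⟫) :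
    ⟪q y, q x⟫ ≤ 0 := by
  have hqTx := hqT.eq_sum_inner_smul (hqT.mem_vectorSpan x hx) (v x)
  have hqTx_nonpos : ⟪qT x, v i - v y⟫ ≤ 0 := by
    rw [hqTx, sum_inner]
    refine sum_nonpos fun j hj => ?_
    rw [real_inner_smul_left]
    rcases eq_or_ne j x with rfl | hjx
    · simp
    · have hedge : 0 ≤ ⟪v j - v x, v i - v y⟫ := by
        have := hmin j hj
        rw [real_inner_comm, ← sub_sub_sub_cancel_right (v j) (v x) (v y), inner_sub_right]
        linarith
      exact mul_nonpos_of_nonpos_of_nonneg (hT hx hj hjx.symm) hedge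
  have hqy_qTx : ⟪q y, qT x⟫ = 0 := by
    rw [hqTx, inner_sum]
    refine Finset.sum_eq_zero fun j hj => ?_
    rw [real_inner_smul_right, hq.inner_sub y hy j (mem_of_mem_erase hj) x (mem_of_mem_erase hx),
      if_neg (ne_of_mem_erase hj).symm, if_neg (ne_of_mem_erase hx).symm, sub_zero, mul_zero]
  have hqy : ⟪qT x, q y⟫ = ∑ j ∈ S, ⟪q y, q j⟫ * ⟪qT x, v j - v i⟫ := by
    conv_lhs => rw [hq.eq_sum_inner_smul (hq.mem_vectorSpan y hy) (v i)]
    simp only [inner_sum, real_inner_smul_right]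
  have hfacet_sum : ∑ j ∈ S.erase y, ⟪q y, q j⟫ * ⟪qT x, v j - v i⟫ = ⟪q y, q x⟫ := by
    rw [sum_eq_single_of_mem x hx]
    · rw [hqT.inner_sub x hx x hx i hi, if_pos rfl, if_neg hix.symm, sub_zero, mul_one]
    · intro j hj hjx
      rw [hqT.inner_sub x hx j hj i hi, if_neg hjx.symm, if_neg hix.symm, sub_zero, mul_zero]
  rw [← add_sum_erase S _ hy, hfacet_sum, real_inner_comm, hqy_qTx,
    ← neg_sub (v i), inner_neg_right] at hqy
  have hkey : ⟪q y, q x⟫ = ⟪q y, q y⟫ * ⟪qT x, v i - v y⟫ := by linarith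
  rw [hkey]
  exact mul_nonpos_of_nonneg_of_nonpos real_inner_self_nonneg hqTx_nonpos

end IsDualFamily

theorem isNonobtuseFace_of_forall_erase (hv : AffineIndependent ℝ v)
    (hfacet : ∀ y ∈ S, IsNonobtuseFace v (S.erase y))
    (hmin : ∀ y ∈ S, ∀ x ∈ S.erase y, ∃ i ∈ S.erase y, i ≠ x ∧
      ∀ j ∈ S.erase y, ⟪v i - v y, v x - v y⟫ ≤ ⟪v i - v y, v j - v y⟫) :
    IsNonobtuseFace v S := by
  obtain ⟨q, hq⟩ := exists_isDualFamily hv S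
  refine ⟨q, hq, fun y hy x hx hyx => ?_⟩
  obtain ⟨qT, hqT, hT⟩ := hfacet y hy
  have hx' : x ∈ S.erase y := mem_erase.2 ⟨hyx.symm, hx⟩
  obtain ⟨i, hi, hix, hi_min⟩ := hmin y hy x hx'
  exact hq.inner_nonpos_of_facet hy hqT hT hx' hi hix hi_min

theorem isNonobtuseFace_iff [Fintype κ] [DecidableEq κ] (hv : AffineIndependent ℝ v)
    (hS : S = insert c (univ.image e)) (he : Injective e) (hec : ∀ i, e i ≠ c) :
    IsNonobtuseFace v S ↔
      IsStieltjes (gram ℝ fun i => v (e i) - v c)⁻¹ ∧ IsWDD (gram ℝ fun i => v (e i) - v c)⁻¹ := by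
  constructor
  · rintro ⟨q, hq, hpw⟩
    exact (hq.isStieltjes_inv_gram_and_isWDD_iff hv hS he hec).2 hpw
  · intro h
    obtain ⟨q, hq⟩ := exists_isDualFamily hv S
    exact ⟨q, hq, (hq.isStieltjes_inv_gram_and_isWDD_iff hv hS he hec).1 h⟩

end DualFamily

theorem Finset.insert_image_val_subtype_ne {ι : Type*} [DecidableEq ι] {S : Finset ι} {c : ι}
    (hc : c ∈ S) : insert c (univ.image fun i : S.subtype (· ≠ c) => i.1.1) = S := by
  ext a
  by_cases hac : a = c
  · simp [hac, hc]
  · simp [hac]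

theorem Finset.card_subtype_ne {ι : Type*} [DecidableEq ι] {S : Finset ι} {c : ι} (hc : c ∈ S) :
    (S.subtype (· ≠ c)).card = S.card - 1 := by
  rw [card_subtype, filter_ne', card_erase_of_mem hc]

section Simplex

variable {n : ℕ} {v : Fin (n + 1) → EuclideanSpace ℝ (Fin n)}

theorem isNonobtuseFace_iff_subMat_vGram (hv : AffineIndependent ℝ v) {S : Finset (Fin (n + 1))}
    {c : Fin (n + 1)} (hc : c ∈ S) :
    IsNonobtuseFace v S ↔ IsStieltjes (subMat (vGram v c) (S.subtype (· ≠ c)))⁻¹ ∧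
      IsWDD (subMat (vGram v c) (S.subtype (· ≠ c)))⁻¹ :=
  isNonobtuseFace_iff hv (insert_image_val_subtype_ne hc).symm
    (fun _ _ h => Subtype.ext (Subtype.ext h)) fun i => i.1.2

theorem isNonobtuseFace_univ_iff (hv : AffineIndependent ℝ v) (ℓ : Fin (n + 1)) :
    IsNonobtuseFace v univ ↔ IsStieltjes (vGram v ℓ)⁻¹ ∧ IsWDD (vGram v ℓ)⁻¹ :=
  isNonobtuseFace_iff hv (by ext a; by_cases a = ℓ <;> simp [*]) Subtype.val_injective
    fun i => i.2

theorem exists_min_of_isNonblocking {S : Finset (Fin (n + 1))} {y : Fin (n + 1)}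
    (h : IsNonblocking (subMat (vGram v y) (S.subtype (· ≠ y)))) {x : Fin (n + 1)}
    (hx : x ∈ S.erase y) : ∃ i ∈ S.erase y, i ≠ x ∧
      ∀ j ∈ S.erase y, ⟪v i - v y, v x - v y⟫ ≤ ⟪v i - v y, v j - v y⟫ := by
  obtain ⟨hxy, hxS⟩ := mem_erase.1 hx
  obtain ⟨⟨⟨i, hiy⟩, hiS⟩, hix, hmin⟩ := h ⟨⟨x, hxy⟩, mem_subtype.2 hxS⟩
  refine ⟨i, mem_erase.2 ⟨hiy, mem_subtype.1 hiS⟩, fun h => hix (by subst h; rfl),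
    fun j hj => ?_⟩
  obtain ⟨hjy, hjS⟩ := mem_erase.1 hj
  exact hmin ⟨⟨j, hjy⟩, mem_subtype.2 hjS⟩

end Simplex

theorem stmt10_general (n k : ℕ) (hkn : k ≤ n)
    (v : Fin (n + 1) → EuclideanSpace ℝ (Fin n)) (hv : AffineIndependent ℝ v)
    (hface : ∀ ℓ (s : Finset {x : Fin (n + 1) // x ≠ ℓ}), s.card = k →
      IsStieltjes (subMat (vGram v ℓ) s)⁻¹ ∧ IsWDD (subMat (vGram v ℓ) s)⁻¹)
    (hnb : ∀ ℓ (m : ℕ), k < m → m ≤ n → ∀ s : Finset {x : Fin (n + 1) // x ≠ ℓ},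
      s.card = m → IsNonblocking (subMat (vGram v ℓ) s)) :
    ∀ ℓ, IsStieltjes (vGram v ℓ)⁻¹ ∧ IsWDD (vGram v ℓ)⁻¹ := by
  have hfaces : ∀ t, k + 1 ≤ t → ∀ S : Finset (Fin (n + 1)), S.card = t → IsNonobtuseFace v S := by
    intro t ht
    induction t, ht using Nat.le_induction with
    | base =>
      intro S hS
      obtain ⟨c, hc⟩ := card_pos.1 (by omega : 0 < S.card)
      exact (isNonobtuseFace_iff_subMat_vGram hv hc).2
        (hface c _ (by simp [card_subtype_ne hc, hS]))
    | succ t ht ih =>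
      intro S hS
      have htn : t ≤ n := by simpa [hS] using S.card_le_univ
      refine isNonobtuseFace_of_forall_erase hv (fun y hy => ih _ (by simp [hy, hS])) ?_
      exact fun y hy x hx => exists_min_of_isNonblocking
        (hnb y t (by omega) htn _ (by simp [card_subtype_ne hy, hS])) hx
  exact fun ℓ => (isNonobtuseFace_univ_iff hv ℓ).1 (hfaces (n + 1) (by omega) univ (card_fin _))

theorem stmt10 (n k : ℕ) (hk : 2 ≤ k) (hkn : k ≤ n)
    (v : Fin (n + 1) → EuclideanSpace ℝ (Fin n)) (hv : AffineIndependent ℝ v)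
    (hface : ∀ ℓ (s : Finset {x : Fin (n + 1) // x ≠ ℓ}), s.card = k →
      IsStieltjes (subMat (vGram v ℓ) s)⁻¹ ∧ IsWDD (subMat (vGram v ℓ) s)⁻¹)
    (hnb : ∀ ℓ (m : ℕ), k < m → m ≤ n → ∀ s : Finset {x : Fin (n + 1) // x ≠ ℓ},
      s.card = m → IsNonblocking (subMat (vGram v ℓ) s)) :
    ∀ ℓ, IsStieltjes (vGram v ℓ)⁻¹ ∧ IsWDD (vGram v ℓ)⁻¹ :=
  stmt10_general n k hkn v hv hface hnb
end
end
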